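/- arXiv:2109.01829 — 3 statements merged into one kernel-verified Lean document; each statement's English description precedes it below -/
import Mathlib

section
/- Let g ∈ ℝⁿ \ {0}, let H be a symmetric n×n real matrix, let ρ: ℝ → [0,∞] be a proper closed convex function with ρ(0) = 0 satisfying Assumption 1, and set v_{ρr} := inf_x { 2gᵀx + xᵀHx + ρ(‖x‖²) }. Define the dual value v_{ρd} := sup { −gᵀ(H − λI)†g − ρ⁺(−λ) : λ ≤ 0, H − λI ⪰ 0, g ∈ Range(H − λI) }, where (H − λI)† is the Moore–Penrose pseudoinverse and ρ⁺(u) := sup_{t ≥ 0} { ut − ρ(t) }. Then v_{ρd} = v_{ρr}, and the supremum defining v_{ρd} is attained whenever v_{ρr} is finite. -/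
open Matrix Filter Set Topology

noncomputable section

/-- The quadratic part `2 gᵀ x + xᵀ H x` of the objective. -/
def quadObj {n : ℕ} (g : Fin n → ℝ) (H : Matrix (Fin n) (Fin n) ℝ) (x : Fin n → ℝ) : ℝ :=
  2 * (g ⬝ᵥ x) + x ⬝ᵥ H.mulVec x

/-- The squared Euclidean norm `‖x‖²`. -/
def nsq {m : Type*} [Fintype m] (x : m → ℝ) : ℝ := x ⬝ᵥ x

/-- The Euclidean norm `‖x‖`. -/
def vnorm {m : Type*} [Fintype m] (x : m → ℝ) : ℝ := Real.sqrt (x ⬝ᵥ x)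

/-- `ρ : ℝ → [0,∞]` is proper closed (lsc) convex with `ρ 0 = 0`. -/
def RhoBasic (ρ : ℝ → EReal) : Prop :=
  (∀ t, 0 ≤ ρ t) ∧ ρ 0 = 0 ∧ LowerSemicontinuous ρ ∧
    ∀ a b θ : ℝ, 0 ≤ θ → θ ≤ 1 →
      ρ (θ * a + (1 - θ) * b) ≤ (θ : EReal) * ρ a + ((1 - θ : ℝ) : EReal) * ρ b

/-- Assumption 1: `ρ` is nondecreasing, vanishes on `(-∞,0]`, finite somewhere on `(0,∞)`. -/
def Assump1 (ρ : ℝ → EReal) : Prop :=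
  Monotone ρ ∧ (∀ t ≤ (0:ℝ), ρ t = 0) ∧ ∃ t₀ : ℝ, 0 < t₀ ∧ ρ t₀ < ⊤

/-- Assumption 2: supercoercivity, `lim_{t→∞} ρ(t)/t = ∞`. -/
def Assump2 (ρ : ℝ → EReal) : Prop :=
  ∀ M : ℝ, ∀ᶠ t : ℝ in atTop, ((M * t : ℝ) : EReal) ≤ ρ t

/-- The monotone conjugate `ρ⁺(u) = sup_{t ≥ 0} (ut − ρ(t))`. -/
def mconj (ρ : ℝ → EReal) (u : ℝ) : EReal :=
  ⨆ t : {t : ℝ // 0 ≤ t}, (((u * (t : ℝ) : ℝ) : EReal) - ρ t)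

/-- The real-valued monotone conjugate (under supercoercivity `ρ⁺` is finite). -/
def mconjR (ρ : ℝ → EReal) (u : ℝ) : ℝ := (mconj ρ u).toReal

/-- Assumption 3: `ρ⁺` is differentiable on `(0,∞)`. -/
def Assump3 (ρ : ℝ → EReal) : Prop :=
  ∀ u : ℝ, 0 < u → DifferentiableAt ℝ (mconjR ρ) u

/-- Convex subdifferential of an `EReal`-valued function on `ℝ`. -/
def subdiff (f : ℝ → EReal) (x : ℝ) : Set ℝ :=
  {s : ℝ | ∀ y : ℝ, f x + ((s * (y - x) : ℝ) : EReal) ≤ f y}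

/-- Indicator function `δ_{ℝ₊}` of `[0,∞)`. -/
def indNonneg : ℝ → EReal := fun t => if 0 ≤ t then (0 : EReal) else ⊤

/-- Smallest eigenvalue of a symmetric matrix, via the Rayleigh quotient. -/
def lambdaMin {m : Type*} [Fintype m] (A : Matrix m m ℝ) : ℝ :=
  ⨅ x : {x : m → ℝ // x ⬝ᵥ x = 1}, ((x : m → ℝ) ⬝ᵥ A.mulVec (x : m → ℝ))

/-- Euclidean operator norm of a matrix. -/
def opNorm {m : Type*} [Fintype m] (A : Matrix m m ℝ) : ℝ :=
  ⨆ x : {x : m → ℝ // x ⬝ᵥ x = 1}, vnorm (A.mulVec (x : m → ℝ))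

/-- The bordered matrix `B(t) = [[t, gᵀ],[g, H]]`. -/
def Bmat {n : ℕ} (g : Fin n → ℝ) (H : Matrix (Fin n) (Fin n) ℝ) (t : ℝ) :
    Matrix (Fin (n+1)) (Fin (n+1)) ℝ :=
  Matrix.of (Fin.cons (Fin.cons t g) (fun i => Fin.cons (g i) (H i)))

/-- Moore–Penrose pseudoinverse of a real symmetric matrix (via the spectral theorem). -/
def symPinv {n : ℕ} (A : Matrix (Fin n) (Fin n) ℝ) : Matrix (Fin n) (Fin n) ℝ :=
  if h : A.IsHermitian then
    (h.eigenvectorUnitary : Matrix (Fin n) (Fin n) ℝ) *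
      Matrix.diagonal (fun i => (h.eigenvalues i)⁻¹) *
      star (h.eigenvectorUnitary : Matrix (Fin n) (Fin n) ℝ)
  else 0

/-- The set of minimizers of `ρ`. -/
def argminSet (ρ : ℝ → EReal) : Set ℝ := {t : ℝ | ∀ s : ℝ, ρ t ≤ ρ s}

/-- The RW-dual function `k̂(t) = inf_{γ ≥ 0} { ρ(γ−1) + γ λ_min(B(t)) }`. -/
def khat {n : ℕ} (ρ : ℝ → EReal) (g : Fin n → ℝ) (H : Matrix (Fin n) (Fin n) ℝ) (t : ℝ) : EReal :=
  ⨅ γ : {γ : ℝ // 0 ≤ γ},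
    (ρ ((γ : ℝ) - 1) + ((((γ : ℝ) * lambdaMin (Bmat g H t)) : ℝ) : EReal))



/- ===================== auxiliary lemmas ===================== -/

lemma spec_decomp {n : ℕ} {A : Matrix (Fin n) (Fin n) ℝ} (hA : A.IsHermitian) :
    ∃ (V : Matrix (Fin n) (Fin n) ℝ) (d : Fin n → ℝ),
      Vᵀ * V = 1 ∧ V * Vᵀ = 1 ∧ A = V * Matrix.diagonal d * Vᵀ ∧
      symPinv A = V * Matrix.diagonal (fun i => (d i)⁻¹) * Vᵀ ∧
      (A.PosSemidef → ∀ i, 0 ≤ d i) := by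
  refine ⟨(hA.eigenvectorUnitary : Matrix (Fin n) (Fin n) ℝ), hA.eigenvalues, ?_, ?_, ?_, ?_, ?_⟩
  · have := Unitary.coe_star_mul_self hA.eigenvectorUnitary
    rwa [Matrix.star_eq_conjTranspose, Matrix.conjTranspose_eq_transpose_of_trivial] at this
  · have := Unitary.coe_mul_star_self hA.eigenvectorUnitary
    rw [Unitary.coe_star] at this
    rwa [Matrix.star_eq_conjTranspose, Matrix.conjTranspose_eq_transpose_of_trivial] at this
  · have := hA.spectral_theorem
    rw [Unitary.conjStarAlgAut_apply, Matrix.star_eq_conjTranspose,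
      Matrix.conjTranspose_eq_transpose_of_trivial] at this
    exact this
  · rw [symPinv, dif_pos hA, Matrix.star_eq_conjTranspose,
      Matrix.conjTranspose_eq_transpose_of_trivial]
  · intro h i
    exact h.eigenvalues_nonneg i

lemma mulVec_dot {n : ℕ} {V : Matrix (Fin n) (Fin n) ℝ} (hV : Vᵀ * V = 1)
    (a b : Fin n → ℝ) : (V *ᵥ a) ⬝ᵥ (V *ᵥ b) = a ⬝ᵥ b := by
  rw [dotProduct_mulVec, ← Matrix.vecMul_transpose, Matrix.vecMul_vecMul, hV, Matrix.vecMul_one]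

lemma mulVec_hat {n : ℕ} {V : Matrix (Fin n) (Fin n) ℝ} (hV2 : V * Vᵀ = 1)
    (x : Fin n → ℝ) : V *ᵥ (Vᵀ *ᵥ x) = x := by
  rw [Matrix.mulVec_mulVec, hV2, Matrix.one_mulVec]

lemma hat_mulVec {n : ℕ} {V : Matrix (Fin n) (Fin n) ℝ} (hV : Vᵀ * V = 1)
    (w : Fin n → ℝ) : Vᵀ *ᵥ (V *ᵥ w) = w := by
  rw [Matrix.mulVec_mulVec, hV, Matrix.one_mulVec]

lemma diag_mulVec_hat {n : ℕ} {A V : Matrix (Fin n) (Fin n) ℝ} {d : Fin n → ℝ}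
    (hV : Vᵀ * V = 1) (hA : A = V * Matrix.diagonal d * Vᵀ) (w : Fin n → ℝ) :
    A *ᵥ (V *ᵥ w) = V *ᵥ (fun i => d i * w i) := by
  subst hA
  rw [← Matrix.mulVec_mulVec, ← Matrix.mulVec_mulVec, hat_mulVec hV w]
  have h : Matrix.diagonal d *ᵥ w = fun i => d i * w i := by
    ext i; exact Matrix.mulVec_diagonal d w i
  rw [h]

lemma dot_mulVec_hat {n : ℕ} {V : Matrix (Fin n) (Fin n) ℝ}
    (hV : Vᵀ * V = 1) (hV2 : V * Vᵀ = 1) (g w : Fin n → ℝ) :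
    g ⬝ᵥ (V *ᵥ w) = (Vᵀ *ᵥ g) ⬝ᵥ w := by
  conv_lhs => rw [← mulVec_hat hV2 g]
  rw [mulVec_dot hV]

lemma quad_hat {n : ℕ} {A V : Matrix (Fin n) (Fin n) ℝ} {d : Fin n → ℝ}
    (hV : Vᵀ * V = 1) (hV2 : V * Vᵀ = 1) (hA : A = V * Matrix.diagonal d * Vᵀ)
    (g w : Fin n → ℝ) :
    2 * (g ⬝ᵥ (V *ᵥ w)) + (V *ᵥ w) ⬝ᵥ A *ᵥ (V *ᵥ w)
      = ∑ i, (2 * (Vᵀ *ᵥ g) i * w i + d i * w i ^ 2) := by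
  rw [dot_mulVec_hat hV hV2, diag_mulVec_hat hV hA, mulVec_dot hV]
  simp only [dotProduct, Finset.mul_sum]
  rw [← Finset.sum_add_distrib]
  exact Finset.sum_congr rfl fun i _ => by ring

lemma nsq_hat {n : ℕ} {V : Matrix (Fin n) (Fin n) ℝ} (hV : Vᵀ * V = 1) (w : Fin n → ℝ) :
    (V *ᵥ w) ⬝ᵥ (V *ᵥ w) = ∑ i, w i ^ 2 := by
  rw [mulVec_dot hV]
  simp only [dotProduct]
  exact Finset.sum_congr rfl fun i _ => by ring

lemma quad_min {n : ℕ} (g : Fin n → ℝ) {A : Matrix (Fin n) (Fin n) ℝ} (hA : A.IsHermitian)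
    (hpsd : A.PosSemidef) (hrange : ∃ y, A *ᵥ y = g) :
    A *ᵥ (symPinv A *ᵥ g) = g ∧
    (∀ x : Fin n → ℝ, -(g ⬝ᵥ symPinv A *ᵥ g) ≤ 2 * (g ⬝ᵥ x) + x ⬝ᵥ A *ᵥ x) ∧
    2 * (g ⬝ᵥ (-(symPinv A *ᵥ g))) + (-(symPinv A *ᵥ g)) ⬝ᵥ A *ᵥ (-(symPinv A *ᵥ g))
      = -(g ⬝ᵥ symPinv A *ᵥ g) := by
  obtain ⟨V, d, hV, hV2, hAd, hP, hpos⟩ := spec_decomp hA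
  have hd := hpos hpsd
  obtain ⟨y, hy⟩ := hrange
  have hker : ∀ i, d i = 0 → (Vᵀ *ᵥ g) i = 0 := by
    intro i hi
    have h0 : A *ᵥ (V *ᵥ (Vᵀ *ᵥ y)) = g := by rw [mulVec_hat hV2, hy]
    rw [diag_mulVec_hat hV hAd] at h0
    have h2 : Vᵀ *ᵥ g = fun j => d j * (Vᵀ *ᵥ y) j := by rw [← h0, hat_mulVec hV]
    rw [h2]; simp [hi]
  have hsp : symPinv A *ᵥ g = V *ᵥ (fun i => (d i)⁻¹ * (Vᵀ *ᵥ g) i) := by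
    conv_lhs => rw [← mulVec_hat hV2 g]
    exact diag_mulVec_hat hV hP _
  have hAsp : A *ᵥ (symPinv A *ᵥ g) = g := by
    rw [hsp, diag_mulVec_hat hV hAd]
    have h3 : (fun i => d i * ((d i)⁻¹ * (Vᵀ *ᵥ g) i)) = Vᵀ *ᵥ g := by
      ext i
      rcases eq_or_ne (d i) 0 with h | h
      · simp [h, hker i h]
      · field_simp
    rw [h3, mulVec_hat hV2]
  have hval : g ⬝ᵥ symPinv A *ᵥ g = ∑ i, (d i)⁻¹ * (Vᵀ *ᵥ g) i ^ 2 := by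
    rw [hsp, dot_mulVec_hat hV hV2]
    simp only [dotProduct]
    exact Finset.sum_congr rfl fun i _ => by ring
  refine ⟨hAsp, ?_, ?_⟩
  · intro x
    have hx : x = V *ᵥ (Vᵀ *ᵥ x) := (mulVec_hat hV2 x).symm
    conv_rhs => rw [hx]
    rw [quad_hat hV hV2 hAd, hval, neg_le, ← Finset.sum_neg_distrib]
    apply Finset.sum_le_sum
    intro i _
    rcases eq_or_lt_of_le (hd i) with h | h
    · simp [← h, hker i h.symm]
    · have h1 : (d i)⁻¹ * d i = 1 := inv_mul_cancel₀ (ne_of_gt h)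
      nlinarith [sq_nonneg (d i * (Vᵀ *ᵥ x) i + (Vᵀ *ᵥ g) i), sq_nonneg ((Vᵀ *ᵥ x) i),
        mul_pos h h]
  · have hw : -(symPinv A *ᵥ g) = V *ᵥ (fun i => -((d i)⁻¹ * (Vᵀ *ᵥ g) i)) := by
      rw [hsp, ← Matrix.mulVec_neg]
      rfl
    rw [hw, quad_hat hV hV2 hAd, hval, ← Finset.sum_neg_distrib]
    apply Finset.sum_congr rfl
    intro i _
    rcases eq_or_ne (d i) 0 with h | h
    · simp [h, hker i h]
    · field_simp
      ring

lemma quad_lower {n : ℕ} (g : Fin n → ℝ) {A : Matrix (Fin n) (Fin n) ℝ} (hA : A.IsHermitian)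
    (b : ℝ) (hb : ∀ x : Fin n → ℝ, b ≤ 2 * (g ⬝ᵥ x) + x ⬝ᵥ A *ᵥ x) :
    A.PosSemidef ∧ ∃ y, A *ᵥ y = g := by
  obtain ⟨V, d, hV, hV2, hAd, hP, hpos⟩ := spec_decomp hA
  have hval : ∀ (i : Fin n) (s : ℝ),
      b ≤ 2 * (Vᵀ *ᵥ g) i * s + d i * s ^ 2 := by
    intro i s
    have h := hb (V *ᵥ (fun k => if k = i then s else 0))
    rw [quad_hat hV hV2 hAd] at h
    calc b ≤ _ := h
    _ = 2 * (Vᵀ *ᵥ g) i * s + d i * s ^ 2 := by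
        rw [Finset.sum_eq_single i]
        · simp
        · intro j _ hj; simp [hj]
        · intro h'; exact absurd (Finset.mem_univ i) h'
  have hd : ∀ i, 0 ≤ d i := by
    intro i
    by_contra hneg
    push_neg at hneg
    set a := (Vᵀ *ᵥ g) i with ha
    set s : ℝ := max 1 ((2 * |a| + |b| + 1) / (-d i)) with hs
    have hs1 : (1:ℝ) ≤ s := le_max_left _ _
    have hs0 : (2 * |a| + |b| + 1) / (-d i) ≤ s := le_max_right _ _
    have hdn : (0:ℝ) < -d i := by linarith
    have hs2 : d i * s ≤ -(2 * |a|) - |b| - 1 := by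
      rw [div_le_iff₀ hdn] at hs0
      nlinarith
    have h3 := hval i s
    nlinarith [le_abs_self a, neg_abs_le a, neg_abs_le b, le_abs_self b,
      mul_le_mul_of_nonneg_right hs2 (le_trans zero_le_one hs1),
      mul_le_mul_of_nonneg_right (le_abs_self a) (le_trans zero_le_one hs1)]
  have hker : ∀ i, d i = 0 → (Vᵀ *ᵥ g) i = 0 := by
    intro i hdi
    by_contra hne
    set a := (Vᵀ *ᵥ g) i with ha
    have h := hval i ((b - 1) / (2 * a))
    rw [hdi] at h
    have h2 : (2 * a) ≠ 0 := by simpa using hne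
    have h3 : 2 * a * ((b - 1) / (2 * a)) = b - 1 := by field_simp
    rw [zero_mul, add_zero, h3] at h
    linarith
  refine ⟨Matrix.posSemidef_iff_dotProduct_mulVec.2 ⟨hA, ?_⟩, ⟨V *ᵥ (fun i => (d i)⁻¹ * (Vᵀ *ᵥ g) i), ?_⟩⟩
  · intro x
    have hx : x = V *ᵥ (Vᵀ *ᵥ x) := (mulVec_hat hV2 x).symm
    have h0 : star x ⬝ᵥ A *ᵥ x = x ⬝ᵥ A *ᵥ x := by congr 1
    have h1 : (0:ℝ) ≤ 2 * ((0 : Fin n → ℝ) ⬝ᵥ x) + x ⬝ᵥ A *ᵥ x := by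
      conv_rhs => rw [hx]
      rw [quad_hat hV hV2 hAd]
      apply Finset.sum_nonneg
      intro i _
      have hz : Vᵀ *ᵥ (0 : Fin n → ℝ) = 0 := by simp
      rw [hz]
      simp only [Pi.zero_apply, mul_zero, zero_mul, zero_add]
      exact mul_nonneg (hd i) (sq_nonneg _)
    rw [h0]
    simpa using h1
  · rw [diag_mulVec_hat hV hAd]
    have h3 : (fun i => d i * ((d i)⁻¹ * (Vᵀ *ᵥ g) i)) = Vᵀ *ᵥ g := by
      ext i
      rcases eq_or_ne (d i) 0 with h | h
      · simp [h, hker i h]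
      · field_simp
    rw [h3, mulVec_hat hV2]

lemma key_convexity {n : ℕ} (g : Fin n → ℝ) {H : Matrix (Fin n) (Fin n) ℝ}
    (hH : H.IsHermitian) {θ : ℝ} (hθ0 : 0 ≤ θ) (hθ1 : θ ≤ 1) (x₁ x₂ : Fin n → ℝ) :
    ∃ x : Fin n → ℝ, x ⬝ᵥ x = θ * (x₁ ⬝ᵥ x₁) + (1 - θ) * (x₂ ⬝ᵥ x₂) ∧
      2 * (g ⬝ᵥ x) + x ⬝ᵥ H *ᵥ x
        ≤ θ * (2 * (g ⬝ᵥ x₁) + x₁ ⬝ᵥ H *ᵥ x₁)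
          + (1 - θ) * (2 * (g ⬝ᵥ x₂) + x₂ ⬝ᵥ H *ᵥ x₂) := by
  obtain ⟨V, d, hV, hV2, hAd, hP, hpos⟩ := spec_decomp hH
  have hθ1' : (0:ℝ) ≤ 1 - θ := by linarith
  set u := Vᵀ *ᵥ x₁ with hu
  set v := Vᵀ *ᵥ x₂ with hv
  set gh := Vᵀ *ᵥ g with hgh
  set w : Fin n → ℝ := fun i =>
    (if gh i ≤ 0 then 1 else -1) * Real.sqrt (θ * u i ^ 2 + (1 - θ) * v i ^ 2) with hw
  have hR : ∀ i, (0:ℝ) ≤ θ * u i ^ 2 + (1 - θ) * v i ^ 2 := fun i =>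
    add_nonneg (mul_nonneg hθ0 (sq_nonneg _)) (mul_nonneg hθ1' (sq_nonneg _))
  have hsq : ∀ i, w i ^ 2 = θ * u i ^ 2 + (1 - θ) * v i ^ 2 := by
    intro i
    rw [hw]
    simp only
    rw [mul_pow, Real.sq_sqrt (hR i)]
    split_ifs <;> norm_num
  refine ⟨V *ᵥ w, ?_, ?_⟩
  · rw [nsq_hat hV]
    conv_rhs => rw [← mulVec_hat hV2 x₁, ← mulVec_hat hV2 x₂]
    rw [nsq_hat hV, nsq_hat hV, Finset.mul_sum, Finset.mul_sum, ← Finset.sum_add_distrib]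
    exact Finset.sum_congr rfl fun i _ => hsq i
  · conv_rhs => rw [← mulVec_hat hV2 x₁, ← mulVec_hat hV2 x₂]
    rw [quad_hat hV hV2 hAd, quad_hat hV hV2 hAd, quad_hat hV hV2 hAd,
      Finset.mul_sum, Finset.mul_sum, ← Finset.sum_add_distrib]
    apply Finset.sum_le_sum
    intro i _
    simp only [← hgh, ← hu, ← hv]
    have hgw : gh i * w i = -(|gh i| * Real.sqrt (θ * u i ^ 2 + (1 - θ) * v i ^ 2)) := by
      rw [hw]
      simp only
      split_ifs with h
      · rw [abs_of_nonpos h]; ring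
      · rw [abs_of_pos (lt_of_not_ge h)]; ring
    have habs : |θ * u i + (1 - θ) * v i| ≤ Real.sqrt (θ * u i ^ 2 + (1 - θ) * v i ^ 2) := by
      rw [← Real.sqrt_sq_eq_abs]
      apply Real.sqrt_le_sqrt
      nlinarith [sq_nonneg (u i - v i), mul_nonneg hθ0 hθ1']
    have h1 : -(|gh i| * Real.sqrt (θ * u i ^ 2 + (1 - θ) * v i ^ 2))
        ≤ gh i * (θ * u i + (1 - θ) * v i) := by
      have h2 : |gh i| * |θ * u i + (1 - θ) * v i|
          ≤ |gh i| * Real.sqrt (θ * u i ^ 2 + (1 - θ) * v i ^ 2) :=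
        mul_le_mul_of_nonneg_left habs (abs_nonneg _)
      have h3 := neg_abs_le (gh i * (θ * u i + (1 - θ) * v i))
      rw [abs_mul] at h3
      linarith
    have h4 := hsq i
    have h5 : gh i * w i ≤ gh i * (θ * u i + (1 - θ) * v i) := by rw [hgw]; exact h1
    have h6 : d i * w i ^ 2 = θ * (d i * u i ^ 2) + (1 - θ) * (d i * v i ^ 2) := by
      rw [h4]; ring
    have h7 := mul_le_mul_of_nonneg_left h5 (by norm_num : (0:ℝ) ≤ 2)
    nlinarith [h6, h7]

/- ===================== scalar/EReal helpers ===================== -/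

lemma real_le_of_forall_add {a b : ℝ} (h : ∀ ε : ℝ, 0 < ε → a ≤ b + ε) : a ≤ b := by
  by_contra hlt
  push_neg at hlt
  have := h ((a - b) / 2) (by linarith)
  linarith

lemma ereal_le_coe_of_forall_add {x : EReal} {c : ℝ}
    (h : ∀ ε : ℝ, 0 < ε → x ≤ ((c + ε : ℝ) : EReal)) : x ≤ (c : EReal) := by
  induction x using EReal.rec with
  | bot => exact bot_le
  | coe r =>
    exact EReal.coe_le_coe_iff.2
      (real_le_of_forall_add fun ε hε => EReal.coe_le_coe_iff.1 (h ε hε))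
  | top => simpa using (h 1 one_pos).trans_lt (EReal.coe_lt_top _)

lemma nsq_nonneg {n : ℕ} (x : Fin n → ℝ) : 0 ≤ nsq x := by
  rw [nsq, dotProduct]
  exact Finset.sum_nonneg fun i _ => mul_self_nonneg (x i)

lemma nsq_eq_zero {n : ℕ} {x : Fin n → ℝ} (h : nsq x = 0) : x = 0 := by
  funext i
  have h2 : ∀ j ∈ Finset.univ, (0:ℝ) ≤ x j * x j := fun j _ => mul_self_nonneg (x j)
  have h3 := (Finset.sum_eq_zero_iff_of_nonneg h2).1 h i (Finset.mem_univ i)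
  have := mul_self_eq_zero.1 h3
  simpa using this

lemma nsq_zero {n : ℕ} : nsq (0 : Fin n → ℝ) = 0 := by simp [nsq]

lemma quadObj_zero {n : ℕ} (g : Fin n → ℝ) (H : Matrix (Fin n) (Fin n) ℝ) :
    quadObj g H 0 = 0 := by simp [quadObj]

lemma sphere_exists {n : ℕ} (i₀ : Fin n) {s : ℝ} (hs : 0 ≤ s) :
    ∃ x : Fin n → ℝ, nsq x = s := by
  refine ⟨fun j => if j = i₀ then Real.sqrt s else 0, ?_⟩
  rw [nsq, dotProduct, Finset.sum_eq_single i₀]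
  · simp [Real.mul_self_sqrt hs]
  · intro j _ hj; simp [hj]
  · intro h'; exact absurd (Finset.mem_univ i₀) h'

lemma sub_smul_one_quad {n : ℕ} (H : Matrix (Fin n) (Fin n) ℝ) (l : ℝ) (x : Fin n → ℝ) :
    x ⬝ᵥ (H - l • (1 : Matrix (Fin n) (Fin n) ℝ)) *ᵥ x = x ⬝ᵥ H *ᵥ x - l * (x ⬝ᵥ x) := by
  rw [Matrix.sub_mulVec, dotProduct_sub, Matrix.smul_mulVec, Matrix.one_mulVec,
    dotProduct_smul, smul_eq_mul]

lemma herm_sub_smul {n : ℕ} {H : Matrix (Fin n) (Fin n) ℝ} (hH : H.IsSymm) (l : ℝ) :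
    (H - l • (1 : Matrix (Fin n) (Fin n) ℝ)).IsHermitian := by
  rw [Matrix.IsHermitian, Matrix.conjTranspose_eq_transpose_of_trivial,
    Matrix.transpose_sub, Matrix.transpose_smul, Matrix.transpose_one, hH]

lemma quad_lb {n : ℕ} (g : Fin n → ℝ) {H : Matrix (Fin n) (Fin n) ℝ}
    (hH : H.IsHermitian) :
    ∃ C : ℝ, 0 ≤ C ∧ ∀ x : Fin n → ℝ,
      -(C * Real.sqrt (nsq x) + C * nsq x) ≤ quadObj g H x := by
  obtain ⟨V, d, hV, hV2, hAd, hP, hpos⟩ := spec_decomp hH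
  set gh := Vᵀ *ᵥ g with hgh
  refine ⟨2 * (∑ i, |gh i|) + (∑ i, |d i|), by positivity, ?_⟩
  intro x
  have hx : x = V *ᵥ (Vᵀ *ᵥ x) := (mulVec_hat hV2 x).symm
  set xh := Vᵀ *ᵥ x with hxh
  have hquad : quadObj g H x = ∑ i, (2 * gh i * xh i + d i * xh i ^ 2) := by
    rw [quadObj]
    conv_lhs => rw [hx]
    rw [quad_hat hV hV2 hAd]
  have hnsq : nsq x = ∑ i, xh i ^ 2 := by
    rw [nsq]
    conv_lhs => rw [hx]
    rw [nsq_hat hV]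
  have hs0 : (0:ℝ) ≤ nsq x := nsq_nonneg x
  have hxi2 : ∀ i, xh i ^ 2 ≤ nsq x := by
    intro i
    rw [hnsq]
    exact Finset.single_le_sum (fun j _ => sq_nonneg (xh j)) (Finset.mem_univ i)
  have hxi : ∀ i, |xh i| ≤ Real.sqrt (nsq x) := by
    intro i
    rw [← Real.sqrt_sq_eq_abs]
    exact Real.sqrt_le_sqrt (hxi2 i)
  have hterm : ∀ i, -(2 * |gh i| * Real.sqrt (nsq x) + |d i| * nsq x)
      ≤ 2 * gh i * xh i + d i * xh i ^ 2 := by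
    intro i
    have h1 : -(|gh i| * Real.sqrt (nsq x)) ≤ gh i * xh i := by
      have h2 : |gh i * xh i| ≤ |gh i| * Real.sqrt (nsq x) := by
        rw [abs_mul]
        exact mul_le_mul_of_nonneg_left (hxi i) (abs_nonneg _)
      linarith [neg_abs_le (gh i * xh i)]
    have h3 : -(|d i| * nsq x) ≤ d i * xh i ^ 2 := by
      have h4 : |d i * xh i ^ 2| ≤ |d i| * nsq x := by
        rw [abs_mul, abs_sq]
        exact mul_le_mul_of_nonneg_left (hxi2 i) (abs_nonneg _)
      linarith [neg_abs_le (d i * xh i ^ 2)]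
    linarith
  have hsum := Finset.sum_le_sum fun i (_ : i ∈ Finset.univ) => hterm i
  rw [hquad]
  calc -((2 * (∑ i, |gh i|) + (∑ i, |d i|)) * Real.sqrt (nsq x)
        + (2 * (∑ i, |gh i|) + (∑ i, |d i|)) * nsq x)
      ≤ ∑ i, -(2 * |gh i| * Real.sqrt (nsq x) + |d i| * nsq x) := by
        rw [Finset.sum_neg_distrib, Finset.sum_add_distrib, ← Finset.sum_mul, ← Finset.sum_mul]
        have hg0 : (0:ℝ) ≤ ∑ i, |gh i| := Finset.sum_nonneg fun i _ => abs_nonneg _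
        have hd0 : (0:ℝ) ≤ ∑ i, |d i| := Finset.sum_nonneg fun i _ => abs_nonneg _
        have hsq0 := Real.sqrt_nonneg (nsq x)
        rw [← Finset.mul_sum]
        nlinarith [mul_nonneg hg0 hs0, mul_nonneg hd0 hsq0, mul_nonneg hg0 hsq0,
          mul_nonneg hd0 hs0]
    _ ≤ _ := hsum

theorem stmt0 {n : ℕ} (g : Fin n → ℝ) (hg : g ≠ 0)
    (H : Matrix (Fin n) (Fin n) ℝ) (hH : H.IsSymm)
    (ρ : ℝ → EReal) (hρ : RhoBasic ρ) (h1 : Assump1 ρ)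
    (vpr : EReal)
    (hvpr : vpr = ⨅ x : Fin n → ℝ, ((quadObj g H x : EReal) + ρ (nsq x)))
    (D : Set ℝ)
    (hD : D = {l : ℝ | l ≤ 0 ∧ (H - l • (1 : Matrix (Fin n) (Fin n) ℝ)).PosSemidef ∧
        ∃ y : Fin n → ℝ, (H - l • (1 : Matrix (Fin n) (Fin n) ℝ)).mulVec y = g})
    (dobj : ℝ → EReal)
    (hdobj : dobj = fun l =>
      ((-(g ⬝ᵥ (symPinv (H - l • (1 : Matrix (Fin n) (Fin n) ℝ))).mulVec g) : ℝ) : EReal) - mconj ρ (-l))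
    (vpd : EReal) (hvpd : vpd = ⨆ l : D, dobj (l : ℝ)) :
    vpd = vpr ∧ ((vpr ≠ ⊥ ∧ vpr ≠ ⊤) → ∃ l ∈ D, dobj l = vpd) := by
  classical
  obtain ⟨i₀, hgi⟩ : ∃ i, g i ≠ 0 := by
    by_contra hc
    push_neg at hc
    exact hg (funext fun i => hc i)
  obtain ⟨hρnn, hρ0, hρlsc, hρconv⟩ := hρ
  obtain ⟨hmono, hzero, t₀, ht₀, hρt₀⟩ := h1
  have hρt₀ne : ρ t₀ ≠ ⊤ := ne_of_lt hρt₀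
  have hρnebot : ∀ t : ℝ, ρ t ≠ ⊥ := by
    intro t
    have h0 : (⊥ : EReal) < 0 := by simpa using EReal.bot_lt_coe 0
    exact (lt_of_lt_of_le h0 (hρnn t)).ne'
  have hHherm : H.IsHermitian := by
    rw [Matrix.IsHermitian, Matrix.conjTranspose_eq_transpose_of_trivial]
    exact hH
  have hvpr_le : ∀ x : Fin n → ℝ, vpr ≤ (quadObj g H x : EReal) + ρ (nsq x) := by
    intro x
    rw [hvpr]
    exact iInf_le _ x
  have hmconj_ge : ∀ (u t : ℝ), 0 ≤ t → ((u * t : ℝ) : EReal) - ρ t ≤ mconj ρ u := by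
    intro u t ht
    exact le_iSup (fun p : {t : ℝ // 0 ≤ t} =>
      (((u * (p : ℝ) : ℝ) : EReal) - ρ (p : ℝ))) ⟨t, ht⟩
  have hmconj_nonneg : ∀ u : ℝ, (0 : EReal) ≤ mconj ρ u := by
    intro u
    have h := hmconj_ge u 0 le_rfl
    rw [mul_zero, hρ0] at h
    simpa using h
  -- weak duality
  have hweak : ∀ l : ℝ, l ≤ 0 → (H - l • (1 : Matrix (Fin n) (Fin n) ℝ)).PosSemidef →
      (∃ y : Fin n → ℝ, (H - l • (1 : Matrix (Fin n) (Fin n) ℝ)).mulVec y = g) →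
      ∀ x : Fin n → ℝ, dobj l ≤ (quadObj g H x : EReal) + ρ (nsq x) := by
    intro l hl0 hpsd hrange x
    obtain ⟨_, hmin, _⟩ := quad_min g (herm_sub_smul hH l) hpsd hrange
    have hquad : -(g ⬝ᵥ symPinv (H - l • (1 : Matrix (Fin n) (Fin n) ℝ)) *ᵥ g)
        ≤ quadObj g H x - l * nsq x := by
      have h := hmin x
      rw [sub_smul_one_quad] at h
      rw [quadObj, nsq]
      linarith
    rcases eq_or_ne (ρ (nsq x)) ⊤ with htop | hne
    · rw [htop, EReal.add_top_of_ne_bot (EReal.coe_ne_bot _)]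
      exact le_top
    · have hcoe : (((ρ (nsq x)).toReal : ℝ) : EReal) = ρ (nsq x) :=
        EReal.coe_toReal hne (hρnebot _)
      have h1 : (((-l) * nsq x - (ρ (nsq x)).toReal : ℝ) : EReal) ≤ mconj ρ (-l) := by
        rw [EReal.coe_sub, hcoe]
        exact hmconj_ge (-l) (nsq x) (nsq_nonneg x)
      calc dobj l
          = ((-(g ⬝ᵥ symPinv (H - l • (1 : Matrix (Fin n) (Fin n) ℝ)) *ᵥ g) : ℝ) : EReal)
            - mconj ρ (-l) := by rw [hdobj]
        _ ≤ ((-(g ⬝ᵥ symPinv (H - l • (1 : Matrix (Fin n) (Fin n) ℝ)) *ᵥ g) : ℝ) : EReal)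
            - (((-l) * nsq x - (ρ (nsq x)).toReal : ℝ) : EReal) :=
            EReal.sub_le_sub (le_refl _) h1
        _ = ((-(g ⬝ᵥ symPinv (H - l • (1 : Matrix (Fin n) (Fin n) ℝ)) *ᵥ g)
              - ((-l) * nsq x - (ρ (nsq x)).toReal) : ℝ) : EReal) := by
            norm_cast
        _ ≤ ((quadObj g H x + (ρ (nsq x)).toReal : ℝ) : EReal) := by
            apply EReal.coe_le_coe_iff.2
            linarith
        _ = (quadObj g H x : EReal) + ρ (nsq x) := by rw [EReal.coe_add, hcoe]
  have hvpd_le : vpd ≤ vpr := by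
    rw [hvpd]
    apply iSup_le
    rintro ⟨l, hl⟩
    rw [hD] at hl
    obtain ⟨hl0, hpsd, hrange⟩ := hl
    rw [hvpr]
    exact le_iInf fun x => hweak l hl0 hpsd hrange x
  have hvpr_le0 : vpr ≤ 0 := by
    have h := hvpr_le 0
    rw [quadObj_zero, nsq_zero, hρ0] at h
    simpa using h
  have hvpr_ne_top : vpr ≠ ⊤ := by
    intro h
    rw [h] at hvpr_le0
    exact absurd hvpr_le0 (by simp)
  rcases eq_or_ne vpr ⊥ with hbot | hnebot'
  · constructor
    · rw [hbot]
      exact le_antisymm (hbot ▸ hvpd_le) bot_le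
    · rintro ⟨h1', _⟩
      exact absurd hbot h1'
  -- finite case
  set v := vpr.toReal with hv
  have hvcoe : ((v : ℝ) : EReal) = vpr := EReal.coe_toReal hvpr_ne_top hnebot'
  have hv0 : v ≤ 0 := by
    have h : ((v : ℝ) : EReal) ≤ ((0 : ℝ) : EReal) := by
      rw [hvcoe]
      simpa using hvpr_le0
    exact EReal.coe_le_coe_iff.1 h
  set P : ℝ → ℝ := fun s => sInf (quadObj g H '' {x | nsq x = s}) with hP
  obtain ⟨C, hC0, hCb⟩ := quad_lb g hHherm
  have himg_ne : ∀ {s : ℝ}, 0 ≤ s → (quadObj g H '' {x | nsq x = s}).Nonempty := by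
    intro s hs
    obtain ⟨x, hx⟩ := sphere_exists i₀ hs
    exact ⟨quadObj g H x, x, hx, rfl⟩
  have hbddB : ∀ s : ℝ, BddBelow (quadObj g H '' {x | nsq x = s}) := by
    intro s
    refine ⟨-(C * Real.sqrt s + C * s), ?_⟩
    rintro r ⟨x, hx, rfl⟩
    rw [Set.mem_setOf_eq] at hx
    have h := hCb x
    rw [hx] at h
    exact h
  have hPle' : ∀ (s : ℝ) (x : Fin n → ℝ), nsq x = s → P s ≤ quadObj g H x := by
    intro s x hx
    exact csInf_le (hbddB s) ⟨x, hx, rfl⟩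
  have hPge : ∀ (s b : ℝ), 0 ≤ s → (∀ x : Fin n → ℝ, nsq x = s → b ≤ quadObj g H x) →
      b ≤ P s := by
    intro s b hs hb
    apply le_csInf (himg_ne hs)
    rintro r ⟨x, hx, rfl⟩
    exact hb x hx
  have hP0 : P 0 = 0 := by
    apply le_antisymm
    · have h := hPle' 0 0 nsq_zero
      rwa [quadObj_zero] at h
    · exact hPge 0 0 le_rfl fun x hx => by rw [nsq_eq_zero hx, quadObj_zero]
  have hPconv : ∀ {s₁ s₂ θ : ℝ}, 0 ≤ s₁ → 0 ≤ s₂ → 0 ≤ θ → θ ≤ 1 →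
      P (θ * s₁ + (1 - θ) * s₂) ≤ θ * P s₁ + (1 - θ) * P s₂ := by
    intro s₁ s₂ θ h1' h2' h3' h4'
    apply real_le_of_forall_add
    intro ε hε
    obtain ⟨r₁, hr₁mem, hr₁⟩ := exists_lt_of_csInf_lt (himg_ne h1')
      (lt_add_of_pos_right (P s₁) (half_pos hε))
    obtain ⟨x₁, hx₁, rfl⟩ := hr₁mem
    obtain ⟨r₂, hr₂mem, hr₂⟩ := exists_lt_of_csInf_lt (himg_ne h2')
      (lt_add_of_pos_right (P s₂) (half_pos hε))
    obtain ⟨x₂, hx₂, rfl⟩ := hr₂mem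
    rw [Set.mem_setOf_eq] at hx₁ hx₂
    obtain ⟨x, hxn, hxq⟩ := key_convexity g hHherm h3' h4' x₁ x₂
    have hnx : nsq x = θ * s₁ + (1 - θ) * s₂ := by
      rw [nsq, hxn]
      rw [nsq] at hx₁ hx₂
      rw [hx₁, hx₂]
    have hPx := hPle' _ x hnx
    have hquad : quadObj g H x ≤ θ * quadObj g H x₁ + (1 - θ) * quadObj g H x₂ := by
      rw [quadObj, quadObj, quadObj]
      exact hxq
    have hm1 : θ * quadObj g H x₁ ≤ θ * (P s₁ + ε / 2) :=
      mul_le_mul_of_nonneg_left (le_of_lt hr₁) h3'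
    have hm2 : (1 - θ) * quadObj g H x₂ ≤ (1 - θ) * (P s₂ + ε / 2) :=
      mul_le_mul_of_nonneg_left (le_of_lt hr₂) (by linarith)
    nlinarith [hPx, hquad, hm1, hm2]
  have hvP : ∀ s : ℝ, 0 ≤ s → ρ s ≠ ⊤ → v ≤ P s + (ρ s).toReal := by
    intro s hs hne
    have hcoe : (((ρ s).toReal : ℝ) : EReal) = ρ s := EReal.coe_toReal hne (hρnebot s)
    have key : vpr ≤ ((P s + (ρ s).toReal : ℝ) : EReal) := by
      apply ereal_le_coe_of_forall_add
      intro ε hε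
      obtain ⟨r, hrmem, hr⟩ := exists_lt_of_csInf_lt (himg_ne hs)
        (lt_add_of_pos_right (P s) hε)
      obtain ⟨x, hx, rfl⟩ := hrmem
      rw [Set.mem_setOf_eq] at hx
      calc vpr ≤ (quadObj g H x : EReal) + ρ (nsq x) := hvpr_le x
        _ = ((quadObj g H x + (ρ s).toReal : ℝ) : EReal) := by
            rw [hx, EReal.coe_add, hcoe]
        _ ≤ _ := EReal.coe_le_coe_iff.2 (by linarith)
    rw [← hvcoe] at key
    exact EReal.coe_le_coe_iff.1 key
  -- quadruple inequality
  have hquadr : ∀ s t s' t' : ℝ, 0 ≤ s → s < t → ρ t ≠ ⊤ → 0 ≤ s' → t' < s' → ρ t' ≠ ⊤ →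
      (v - P s - (ρ t).toReal) / (t - s) ≤ (P s' + (ρ t').toReal - v) / (s' - t') := by
    intro s t s' t' hs hst ht hs' ht's ht'
    have hδ : (0:ℝ) < t - s := by linarith
    have hδ' : (0:ℝ) < s' - t' := by linarith
    have hsum : (0:ℝ) < (t - s) + (s' - t') := by linarith
    set θ : ℝ := (s' - t') / ((t - s) + (s' - t')) with hθ
    have hθ0 : 0 ≤ θ := le_of_lt (div_pos hδ' hsum)
    have hθ1 : θ ≤ 1 := by
      rw [hθ, div_le_one hsum]
      linarith
    have hmeq : θ * s + (1 - θ) * s' = θ * t + (1 - θ) * t' := by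
      rw [hθ]
      field_simp
      try ring
    have hm0 : 0 ≤ θ * s + (1 - θ) * s' :=
      add_nonneg (mul_nonneg hθ0 hs) (mul_nonneg (by linarith) hs')
    have hρm : ρ (θ * t + (1 - θ) * t')
        ≤ ((θ * (ρ t).toReal + (1 - θ) * (ρ t').toReal : ℝ) : EReal) := by
      have h := hρconv t t' θ hθ0 hθ1
      calc ρ (θ * t + (1 - θ) * t') ≤ (θ : EReal) * ρ t + ((1 - θ : ℝ) : EReal) * ρ t' := h
        _ = _ := by
            rw [← EReal.coe_toReal ht (hρnebot t), ← EReal.coe_toReal ht' (hρnebot t'),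
              ← EReal.coe_mul, ← EReal.coe_mul, ← EReal.coe_add]
            rw [EReal.toReal_coe, EReal.toReal_coe]
    have hρm_ne : ρ (θ * t + (1 - θ) * t') ≠ ⊤ :=
      ne_top_of_le_ne_top (EReal.coe_ne_top _) hρm
    have hrm_le : (ρ (θ * t + (1 - θ) * t')).toReal
        ≤ θ * (ρ t).toReal + (1 - θ) * (ρ t').toReal := by
      have h := EReal.toReal_le_toReal hρm (hρnebot _) (EReal.coe_ne_top _)
      rwa [EReal.toReal_coe] at h
    have hPm : P (θ * s + (1 - θ) * s') ≤ θ * P s + (1 - θ) * P s' := hPconv hs hs' hθ0 hθ1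
    have hvm : v ≤ P (θ * s + (1 - θ) * s') + (ρ (θ * s + (1 - θ) * s')).toReal :=
      hvP _ hm0 (by rw [hmeq]; exact hρm_ne)
    have hv2 : v ≤ θ * P s + (1 - θ) * P s'
        + (θ * (ρ t).toReal + (1 - θ) * (ρ t').toReal) := by
      have h5 : (ρ (θ * s + (1 - θ) * s')).toReal
          ≤ θ * (ρ t).toReal + (1 - θ) * (ρ t').toReal := by
        rw [hmeq]
        exact hrm_le
      linarith
    rw [div_le_div_iff₀ hδ hδ']
    have h6 := mul_le_mul_of_nonneg_right hv2 (le_of_lt hsum)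
    have h7 : (θ * P s + (1 - θ) * P s' + (θ * (ρ t).toReal + (1 - θ) * (ρ t').toReal))
        * ((t - s) + (s' - t'))
        = (θ * ((t - s) + (s' - t'))) * (P s + (ρ t).toReal)
          + ((1 - θ) * ((t - s) + (s' - t'))) * (P s' + (ρ t').toReal) := by ring
    have hθv1 : θ * ((t - s) + (s' - t')) = s' - t' := by
      rw [hθ]
      field_simp
      try ring
    have hθv2 : (1 - θ) * ((t - s) + (s' - t')) = t - s := by
      rw [hθ]
      field_simp
      try ring
      try ring
    rw [h7, hθv1, hθv2] at h6
    linarith [h6]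
  -- the dual multiplier
  set Lset : Set ℝ := {r | ∃ s t : ℝ, 0 ≤ s ∧ s < t ∧ ρ t ≠ ⊤ ∧
      r = (v - P s - (ρ t).toReal) / (t - s)} with hLdef
  have hLne : Lset.Nonempty := ⟨_, 0, t₀, le_rfl, ht₀, hρt₀ne, rfl⟩
  have hρ0ne : ρ (0:ℝ) ≠ ⊤ := by rw [hρ0]; simp
  have hLbdd : BddAbove Lset := by
    refine ⟨(P t₀ + (ρ (0:ℝ)).toReal - v) / (t₀ - 0), ?_⟩
    rintro r ⟨s, t, hs, hst, ht, rfl⟩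
    exact hquadr s t t₀ 0 hs hst ht (le_of_lt ht₀) ht₀ hρ0ne
  set lam := sSup Lset with hlamdef
  have hlam_ub : ∀ s t : ℝ, 0 ≤ s → s < t → ρ t ≠ ⊤ →
      v - P s - (ρ t).toReal ≤ lam * (t - s) := by
    intro s t hs hst ht
    have h := le_csSup hLbdd (show (v - P s - (ρ t).toReal) / (t - s) ∈ Lset from
      ⟨s, t, hs, hst, ht, rfl⟩)
    rw [div_le_iff₀ (by linarith : (0:ℝ) < t - s)] at h
    linarith
  have hlam_lb : ∀ s' t' : ℝ, 0 ≤ s' → t' < s' → ρ t' ≠ ⊤ →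
      lam * (s' - t') ≤ P s' + (ρ t').toReal - v := by
    intro s' t' hs' ht's ht'
    have h : lam ≤ (P s' + (ρ t').toReal - v) / (s' - t') := by
      apply csSup_le hLne
      rintro r ⟨s, t, hs, hst, ht, rfl⟩
      exact hquadr s t s' t' hs hst ht hs' ht's ht'
    rw [le_div_iff₀ (by linarith : (0:ℝ) < s' - t')] at h
    linarith
  have hmaster : ∀ s t : ℝ, 0 ≤ s → ρ t ≠ ⊤ →
      v + lam * (s - t) ≤ P s + (ρ t).toReal := by
    intro s t hs ht
    rcases lt_trichotomy s t with h | h | h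
    · have h2 := hlam_ub s t hs h ht
      nlinarith [h2]
    · subst h
      have h2 := hvP s hs ht
      nlinarith [h2]
    · have h2 := hlam_lb s t hs h ht
      nlinarith [h2]
  have hlam0 : lam ≤ 0 := by
    by_contra hpos
    push_neg at hpos
    set t : ℝ := (v - 1) / lam with htdef
    have ht : t < 0 := div_neg_of_neg_of_pos (by linarith) hpos
    have hρt : ρ t = 0 := hzero t (le_of_lt ht)
    have h := hmaster 0 t le_rfl (by rw [hρt]; simp)
    rw [hP0, hρt, EReal.toReal_zero] at h
    have hlamne : lam ≠ 0 := ne_of_gt hpos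
    have heq1 : lam * (0 - t) = 1 - v := by
      rw [htdef]
      field_simp
      try ring
    rw [heq1] at h
    linarith
  -- lower bound on the shifted quadratic
  have hlb : ∀ x : Fin n → ℝ,
      v ≤ 2 * (g ⬝ᵥ x) + x ⬝ᵥ (H - lam • (1 : Matrix (Fin n) (Fin n) ℝ)) *ᵥ x := by
    intro x
    have h1 := hmaster (nsq x) 0 (nsq_nonneg x) hρ0ne
    rw [hρ0, EReal.toReal_zero] at h1
    have h2 := hPle' (nsq x) x rfl
    rw [sub_smul_one_quad]
    rw [quadObj] at h2
    rw [show nsq x = x ⬝ᵥ x from rfl] at h1 h2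
    linarith
  obtain ⟨hpsd, hrange⟩ := quad_lower g (herm_sub_smul hH lam) v hlb
  obtain ⟨hAAg, hmin, heqmin⟩ := quad_min g (herm_sub_smul hH lam) hpsd hrange
  set gA : ℝ := g ⬝ᵥ symPinv (H - lam • (1 : Matrix (Fin n) (Fin n) ℝ)) *ᵥ g with hgAdef
  set xs : Fin n → ℝ := -(symPinv (H - lam • (1 : Matrix (Fin n) (Fin n) ℝ)) *ᵥ g) with hxsdef
  have hstar : quadObj g H xs - lam * nsq xs = -gA := by
    rw [quadObj, nsq]
    rw [sub_smul_one_quad] at heqmin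
    linarith [heqmin]
  have hsstar : (0:ℝ) ≤ nsq xs := nsq_nonneg xs
  have hPstar : P (nsq xs) ≤ lam * nsq xs - gA := by
    have h := hPle' (nsq xs) xs rfl
    linarith [hstar]
  have hmin' : ∀ x : Fin n → ℝ, -gA ≤ quadObj g H x - lam * nsq x := by
    intro x
    have h := hmin x
    rw [sub_smul_one_quad] at h
    rw [quadObj, nsq]
    linarith
  -- mconj value
  have hub : mconj ρ (-lam) ≤ ((-v - gA : ℝ) : EReal) := by
    rw [mconj]
    apply iSup_le
    rintro ⟨t, ht⟩
    rcases eq_or_ne (ρ t) ⊤ with htop | hne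
    · rw [htop, EReal.sub_top]
      exact bot_le
    · have hcoe : (((ρ t).toReal : ℝ) : EReal) = ρ t := EReal.coe_toReal hne (hρnebot t)
      have h1 := hmaster (nsq xs) t hsstar hne
      calc ((-lam * t : ℝ) : EReal) - ρ t
          = ((-lam * t - (ρ t).toReal : ℝ) : EReal) := by rw [EReal.coe_sub, hcoe]
        _ ≤ _ := EReal.coe_le_coe_iff.2 (by linarith)
  have hlbconj : ((-v - gA : ℝ) : EReal) ≤ mconj ρ (-lam) := by
    by_contra hlt
    push_neg at hlt
    have hne_top : mconj ρ (-lam) ≠ ⊤ := by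
      intro h
      rw [h] at hlt
      exact absurd hlt not_top_lt
    have hne_bot : mconj ρ (-lam) ≠ ⊥ :=
      (lt_of_lt_of_le (by simpa using EReal.bot_lt_coe 0) (hmconj_nonneg (-lam))).ne'
    set M := (mconj ρ (-lam)).toReal with hMdef
    have hMcoe : ((M : ℝ) : EReal) = mconj ρ (-lam) := EReal.coe_toReal hne_top hne_bot
    have hMlt : M < -v - gA := by
      rw [← hMcoe] at hlt
      exact EReal.coe_lt_coe_iff.1 hlt
    have hbound : ∀ x : Fin n → ℝ,
        ((-gA - M : ℝ) : EReal) ≤ (quadObj g H x : EReal) + ρ (nsq x) := by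
      intro x
      rcases eq_or_ne (ρ (nsq x)) ⊤ with htop | hne
      · rw [htop, EReal.add_top_of_ne_bot (EReal.coe_ne_bot _)]
        exact le_top
      · have hcoe : (((ρ (nsq x)).toReal : ℝ) : EReal) = ρ (nsq x) :=
          EReal.coe_toReal hne (hρnebot _)
        have h1 : ((-lam * nsq x - (ρ (nsq x)).toReal : ℝ) : EReal) ≤ mconj ρ (-lam) := by
          rw [EReal.coe_sub, hcoe]
          exact hmconj_ge (-lam) (nsq x) (nsq_nonneg x)
        have h1' : -lam * nsq x - (ρ (nsq x)).toReal ≤ M := by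
          rw [← hMcoe] at h1
          exact EReal.coe_le_coe_iff.1 h1
        have h2 := hmin' x
        calc ((-gA - M : ℝ) : EReal)
            ≤ ((quadObj g H x + (ρ (nsq x)).toReal : ℝ) : EReal) :=
              EReal.coe_le_coe_iff.2 (by linarith)
          _ = _ := by rw [EReal.coe_add, hcoe]
    have hge : ((-gA - M : ℝ) : EReal) ≤ vpr := by
      rw [hvpr]
      exact le_iInf hbound
    rw [← hvcoe] at hge
    have := EReal.coe_le_coe_iff.1 hge
    linarith
  have hmconj_eq : mconj ρ (-lam) = ((-v - gA : ℝ) : EReal) := le_antisymm hub hlbconj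
  have hlamD : lam ∈ D := by
    rw [hD]
    exact ⟨hlam0, hpsd, hrange⟩
  have hdobj_lam : dobj lam = vpr := by
    rw [hdobj]
    simp only
    rw [hmconj_eq, ← hgAdef]
    rw [show ((-gA : ℝ) : EReal) - ((-v - gA : ℝ) : EReal)
        = ((-gA - (-v - gA) : ℝ) : EReal) from (EReal.coe_sub _ _).symm]
    rw [show (-gA - (-v - gA) : ℝ) = v by ring]
    exact hvcoe
  have hvpd_eq : vpd = vpr := by
    apply le_antisymm hvpd_le
    rw [← hdobj_lam, hvpd]
    exact le_iSup (fun l : D => dobj (l : ℝ)) ⟨lam, hlamD⟩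
  exact ⟨hvpd_eq, fun _ => ⟨lam, hlamD, hdobj_lam.trans hvpd_eq.symm⟩⟩


end
end

section
/- Let g ∈ ℝⁿ \ {0}, let H be a symmetric n×n real matrix, and let ρ: ℝ → [0,∞] be a proper closed convex function with ρ(0) = 0 satisfying Assumption 1. Then x* ∈ ℝⁿ is an optimal solution of the ρRS problem inf_x { 2gᵀx + xᵀHx + ρ(‖x‖²) } if and only if there exists λ* ∈ ℝ such that: (H − λ*I)x* = −g; H − λ*I ⪰ 0 and λ* ≤ 0; and −λ* ∈ ∂(ρ + δ_{ℝ₊})(‖x*‖²), where δ_{ℝ₊} is the indicator function of [0,∞) and ∂ denotes the convex subdifferential. -/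
open Matrix Filter Set Topology

set_option maxHeartbeats 1000000

noncomputable section

section Aux

lemma nsq_nonneg_s1 {m : Type*} [Fintype m] (x : m → ℝ) : 0 ≤ nsq x :=
  Finset.sum_nonneg fun _ _ => mul_self_nonneg _

lemma nsq_pos {m : Type*} [Fintype m] {x : m → ℝ} (hx : x ≠ 0) : 0 < nsq x := by
  rcases (nsq_nonneg_s1 x).lt_or_eq with h | h
  · exact h
  · exact absurd (dotProduct_self_eq_zero.mp h.symm) hx

lemma dot_symm {n : ℕ} {H : Matrix (Fin n) (Fin n) ℝ} (hH : H.IsSymm) (x y : Fin n → ℝ) :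
    x ⬝ᵥ H.mulVec y = y ⬝ᵥ H.mulVec x := by
  rw [Matrix.dotProduct_mulVec, ← Matrix.mulVec_transpose, hH.eq, dotProduct_comm]

lemma quad_diff {n : ℕ} (g : Fin n → ℝ) {H : Matrix (Fin n) (Fin n) ℝ} (hH : H.IsSymm)
    (x y : Fin n → ℝ) :
    quadObj g H y - quadObj g H x
      = 2 * ((H.mulVec x + g) ⬝ᵥ (y - x)) + (y - x) ⬝ᵥ H.mulVec (y - x) := by
  have h1 : x ⬝ᵥ H.mulVec y = y ⬝ᵥ H.mulVec x := dot_symm hH x y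
  simp only [quadObj, Matrix.mulVec_sub, dotProduct_sub, sub_dotProduct, add_dotProduct,
    dotProduct_add, dotProduct_comm (H.mulVec x) y, dotProduct_comm g y,
    dotProduct_comm (H.mulVec x) x, dotProduct_comm g x] at *
  ring_nf
  linarith

lemma quad_key {n : ℕ} {g : Fin n → ℝ} {H : Matrix (Fin n) (Fin n) ℝ} (hH : H.IsSymm)
    {xs : Fin n → ℝ} {l : ℝ} (hfo : H.mulVec xs = l • xs - g) (y : Fin n → ℝ) :
    quadObj g H y - quadObj g H xs - l * (nsq y - nsq xs)
      = (y - xs) ⬝ᵥ H.mulVec (y - xs) - l * nsq (y - xs) := by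
  have h := quad_diff g hH xs y
  rw [sub_eq_iff_eq_add] at h
  rw [h, hfo]
  simp only [nsq, sub_dotProduct, dotProduct_sub, add_dotProduct, dotProduct_add,
    smul_dotProduct, smul_eq_mul, dotProduct_comm xs y]
  ring

lemma sq_le_nsq {n : ℕ} (x : Fin n → ℝ) (i : Fin n) : x i * x i ≤ nsq x :=
  Finset.single_le_sum (f := fun k => x k * x k) (fun k _ => mul_self_nonneg _)
    (Finset.mem_univ i)

lemma quad_abs_le {n : ℕ} (H : Matrix (Fin n) (Fin n) ℝ) (x : Fin n → ℝ) :
    |x ⬝ᵥ H.mulVec x| ≤ (∑ i, ∑ j, |H i j|) * nsq x := by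
  have habs : ∀ i j : Fin n, |x i| * |x j| ≤ nsq x := by
    intro i j
    have hi := sq_le_nsq x i
    have hj := sq_le_nsq x j
    nlinarith [abs_nonneg (x i), abs_nonneg (x j), abs_mul_abs_self (x i),
      abs_mul_abs_self (x j)]
  have h1 : x ⬝ᵥ H.mulVec x = ∑ i, ∑ j, x i * (H i j * x j) := by
    simp [dotProduct, Matrix.mulVec, Finset.mul_sum]
  rw [h1, Finset.sum_mul]
  refine (Finset.abs_sum_le_sum_abs _ _).trans (Finset.sum_le_sum fun i _ => ?_)
  rw [Finset.sum_mul]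
  refine (Finset.abs_sum_le_sum_abs _ _).trans (Finset.sum_le_sum fun j _ => ?_)
  rw [abs_mul, abs_mul]
  calc |x i| * (|H i j| * |x j|) = |H i j| * (|x i| * |x j|) := by ring
    _ ≤ |H i j| * nsq x := mul_le_mul_of_nonneg_left (habs i j) (abs_nonneg _)

lemma sumabs_nonneg {n : ℕ} (H : Matrix (Fin n) (Fin n) ℝ) :
    0 ≤ ∑ i, ∑ j, |H i j| :=
  Finset.sum_nonneg fun _ _ => Finset.sum_nonneg fun _ _ => abs_nonneg _

lemma rho_ne_bot {ρ : ℝ → EReal} (hpos : ∀ t, 0 ≤ ρ t) (t : ℝ) : ρ t ≠ ⊥ := by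
  intro hb
  have := hpos t
  rw [hb] at this
  exact absurd this (by simp)

lemma rho_finite_coe {ρ : ℝ → EReal} (hpos : ∀ t, 0 ≤ ρ t) {t : ℝ} (h : ρ t ≠ ⊤) :
    ρ t = ((ρ t).toReal : EReal) :=
  (EReal.coe_toReal h (rho_ne_bot hpos t)).symm

lemma ereal_toReal_nonneg {x : EReal} (h : 0 ≤ x) : 0 ≤ x.toReal := by
  rcases eq_or_ne x ⊤ with rfl | hx
  · simp
  rcases eq_or_ne x ⊥ with rfl | hb
  · simp at h
  rw [← EReal.coe_toReal hx hb] at h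
  exact_mod_cast h

lemma rho_small {ρ : ℝ → EReal} (hpos : ∀ t, 0 ≤ ρ t) (hzero : ρ 0 = 0)
    (hconv : ∀ a b θ : ℝ, 0 ≤ θ → θ ≤ 1 →
      ρ (θ * a + (1 - θ) * b) ≤ (θ : EReal) * ρ a + ((1 - θ : ℝ) : EReal) * ρ b)
    {t₀ : ℝ} (ht₀ : 0 < t₀) (hfin : ρ t₀ ≠ ⊤)
    {t : ℝ} (h0 : 0 ≤ t) (h1 : t ≤ t₀) :
    ρ t ≤ ((t / t₀ * (ρ t₀).toReal : ℝ) : EReal) := by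
  have hc := hconv t₀ 0 (t / t₀) (div_nonneg h0 ht₀.le) ((div_le_one ht₀).2 h1)
  rw [hzero, mul_zero, mul_zero, add_zero, add_zero, div_mul_cancel₀ t ht₀.ne'] at hc
  rwa [rho_finite_coe hpos hfin, ← EReal.coe_mul] at hc

lemma opt_ne_zero {n : ℕ} {g : Fin n → ℝ} (hg : g ≠ 0) {H : Matrix (Fin n) (Fin n) ℝ}
    {ρ : ℝ → EReal} (hpos : ∀ t, 0 ≤ ρ t) (hzero : ρ 0 = 0)
    (hconv : ∀ a b θ : ℝ, 0 ≤ θ → θ ≤ 1 →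
      ρ (θ * a + (1 - θ) * b) ≤ (θ : EReal) * ρ a + ((1 - θ : ℝ) : EReal) * ρ b)
    {t₀ : ℝ} (ht₀ : 0 < t₀) (hfin : ρ t₀ ≠ ⊤)
    (hopt : ∀ y, (quadObj g H 0 : EReal) + ρ (nsq (0 : Fin n → ℝ))
      ≤ (quadObj g H y : EReal) + ρ (nsq y)) : False := by
  have hG2 : 0 < nsq g := nsq_pos hg
  set G2 := nsq g with hG2def
  set C := g ⬝ᵥ H.mulVec g with hCdef
  set r₀ := (ρ t₀).toReal with hr₀def
  have hr₀ : 0 ≤ r₀ := ereal_toReal_nonneg (hpos t₀)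
  set K := C + G2 * r₀ / t₀ with hKdef
  set ε := min (Real.sqrt (t₀ / G2)) (G2 / (|K| + 1)) with hε
  have hε0 : 0 < ε := lt_min (Real.sqrt_pos.2 (div_pos ht₀ hG2)) (div_pos hG2 (by positivity))
  have hεsq : ε ^ 2 * G2 ≤ t₀ := by
    have h1 : ε ≤ Real.sqrt (t₀ / G2) := min_le_left _ _
    have h2 := Real.sq_sqrt (le_of_lt (div_pos ht₀ hG2))
    have h3 : ε ^ 2 ≤ t₀ / G2 := by nlinarith [Real.sqrt_nonneg (t₀ / G2)]
    calc ε ^ 2 * G2 ≤ (t₀ / G2) * G2 := by nlinarith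
      _ = t₀ := by field_simp
  have hεK : ε * |K| ≤ G2 := by
    have h2 : ε ≤ G2 / (|K| + 1) := min_le_right _ _
    have h3 : (0:ℝ) < |K| + 1 := by positivity
    calc ε * |K| ≤ (G2 / (|K| + 1)) * |K| := mul_le_mul_of_nonneg_right h2 (abs_nonneg _)
      _ ≤ G2 := by rw [div_mul_eq_mul_div, div_le_iff₀ h3]; nlinarith [abs_nonneg K]
  have hy := hopt ((-ε) • g)
  have hq0 : quadObj g H (0 : Fin n → ℝ) = 0 := by simp [quadObj]
  have hnsq0 : nsq (0 : Fin n → ℝ) = 0 := by simp [nsq]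
  have hnsqy : nsq ((-ε) • g) = ε ^ 2 * G2 := by
    simp only [nsq, smul_dotProduct, dotProduct_smul, smul_eq_mul, hG2def]
    ring
  have hqy : quadObj g H ((-ε) • g) = -2 * ε * G2 + ε ^ 2 * C := by
    simp only [quadObj, Matrix.mulVec_smul, smul_dotProduct, dotProduct_smul, smul_eq_mul,
      hG2def, hCdef, nsq]
    ring
  rw [hq0, hnsq0, hzero, hnsqy, hqy] at hy
  have hle := rho_small hpos hzero hconv ht₀ hfin (by positivity) hεsq
  have hchain : ((0:ℝ) : EReal)
      ≤ ((-2 * ε * G2 + ε ^ 2 * C + ε ^ 2 * G2 / t₀ * r₀ : ℝ) : EReal) := by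
    calc ((0:ℝ) : EReal) = (0 : EReal) + 0 := by norm_num
      _ ≤ ((-2 * ε * G2 + ε ^ 2 * C : ℝ) : EReal) + ρ (ε ^ 2 * G2) := by exact_mod_cast hy
      _ ≤ ((-2 * ε * G2 + ε ^ 2 * C : ℝ) : EReal) + ((ε ^ 2 * G2 / t₀ * r₀ : ℝ) : EReal) :=
          add_le_add le_rfl hle
      _ = _ := by rw [← EReal.coe_add]
  rw [EReal.coe_le_coe_iff] at hchain
  have hKε : ε * K ≤ G2 := le_trans (by cases abs_cases K with
    | _ h => nlinarith [hε0.le]) hεK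
  have hchain2 : (0:ℝ) ≤ -2 * ε * G2 + ε ^ 2 * K := by
    rw [hKdef]; ring_nf; ring_nf at hchain; linarith
  nlinarith [hchain2, mul_le_mul_of_nonneg_left hKε hε0.le, mul_pos hε0 hG2]

lemma first_order {n : ℕ} (g : Fin n → ℝ) {H : Matrix (Fin n) (Fin n) ℝ} (hH : H.IsSymm)
    {xs : Fin n → ℝ} (hxs : xs ≠ 0)
    (hopt : ∀ y, nsq y = nsq xs → quadObj g H xs ≤ quadObj g H y) :
    H.mulVec xs + g = ((xs ⬝ᵥ (H.mulVec xs + g)) / nsq xs) • xs := by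
  set ts := nsq xs with hts_def
  have hts : 0 < ts := nsq_pos hxs
  set v := H.mulVec xs + g with hv_def
  set l := (xs ⬝ᵥ v) / ts with hl_def
  by_contra hne
  set w := v - l • xs with hw_def
  have hw : w ≠ 0 := by
    intro h
    apply hne
    have : v = l • xs := by rwa [hw_def, sub_eq_zero] at h
    exact this
  have hv : v = l • xs + w := by rw [hw_def]; module
  have hxw : xs ⬝ᵥ w = 0 := by
    rw [hw_def, dotProduct_sub, dotProduct_smul, smul_eq_mul, hl_def]
    have : xs ⬝ᵥ xs = ts := rfl
    rw [this]
    field_simp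
    ring
  have hwx : w ⬝ᵥ xs = 0 := by rw [dotProduct_comm]; exact hxw
  set W := nsq w with hW_def
  have hW : 0 < W := nsq_pos hw
  set CH := ∑ i, ∑ j, |H i j| with hCH_def
  have hCH : 0 ≤ CH := sumabs_nonneg H
  set D := 2 * |l| + 2 * CH with hD_def
  have hD : 0 ≤ D := by positivity
  set s := min (Real.sqrt (ts / W)) (1 / (D + 1)) with hs_def
  have hs0 : 0 < s := lt_min (Real.sqrt_pos.2 (div_pos hts hW)) (by positivity)
  have hsq : s ^ 2 * W ≤ ts := by
    have h1 : s ≤ Real.sqrt (ts / W) := min_le_left _ _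
    have h2 := Real.sq_sqrt (le_of_lt (div_pos hts hW))
    have h3 : s ^ 2 ≤ ts / W := by nlinarith [Real.sqrt_nonneg (ts / W)]
    calc s ^ 2 * W ≤ (ts / W) * W := by nlinarith
      _ = ts := by field_simp
  have hsD : s * D ≤ 1 := by
    have h2 : s ≤ 1 / (D + 1) := min_le_right _ _
    have h3 : (0:ℝ) < D + 1 := by positivity
    calc s * D ≤ (1 / (D + 1)) * D := mul_le_mul_of_nonneg_right h2 hD
      _ ≤ 1 := by rw [div_mul_eq_mul_div, div_le_one h3]; linarith
  set u := s ^ 2 * W / ts with hu_def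
  have hu0 : 0 ≤ u := by positivity
  have hu1 : u ≤ 1 := by rw [hu_def, div_le_one hts]; exact hsq
  have hu_ts : u * ts = s ^ 2 * W := by rw [hu_def]; field_simp
  set c := Real.sqrt (1 - u) with hc_def
  have hc0 : 0 ≤ c := Real.sqrt_nonneg _
  have hc2 : c ^ 2 = 1 - u := Real.sq_sqrt (by linarith)
  have hc1 : c ≤ 1 := by nlinarith
  have h1c : 1 - c ≤ u := by
    have h1u : (0:ℝ) ≤ 1 - u := by linarith
    have : (1 - u) ≤ c := by
      rw [hc_def, Real.le_sqrt h1u h1u]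
      nlinarith
    linarith
  set y := c • xs - s • w with hy_def
  have hyx : y - xs = (c - 1) • xs - s • w := by rw [hy_def]; module
  have hxx : xs ⬝ᵥ xs = ts := rfl
  have hww : w ⬝ᵥ w = W := rfl
  have hny : nsq y = ts := by
    rw [nsq, hy_def]
    simp only [dotProduct_sub, sub_dotProduct, smul_dotProduct, dotProduct_smul,
      smul_eq_mul, hxx, hww, hxw, hwx]
    nlinarith [hu_ts, hc2]
  have hdot1 : v ⬝ᵥ (y - xs) = (c - 1) * (l * ts) - s * W := by
    rw [hyx, hv]
    simp only [dotProduct_sub, sub_dotProduct, add_dotProduct, dotProduct_smul,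
      smul_dotProduct, smul_eq_mul, hxx, hww, hxw, hwx]
    ring
  have hnsqd : nsq (y - xs) = (c - 1) ^ 2 * ts + s ^ 2 * W := by
    rw [nsq, hyx]
    simp only [dotProduct_sub, sub_dotProduct, smul_dotProduct, dotProduct_smul,
      smul_eq_mul, hxx, hww, hxw, hwx]
    ring
  set R := (y - xs) ⬝ᵥ H.mulVec (y - xs) with hR_def
  have h5 : 0 ≤ 2 * ((c - 1) * (l * ts) - s * W) + R := by
    have := quad_diff g hH xs y
    rw [hdot1] at this
    have h6 := hopt y hny
    linarith
  have hRabs := quad_abs_le H (y - xs)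
  rw [hnsqd, ← hR_def, ← hCH_def] at hRabs
  have e2 : (c - 1) ^ 2 * ts ≤ s ^ 2 * W := by nlinarith [h1c, hu_ts, hu1, hts.le, hc1]
  have hR' : R ≤ CH * (2 * (s ^ 2 * W)) := by
    have := le_abs_self R
    have h7 : CH * ((c - 1) ^ 2 * ts + s ^ 2 * W) ≤ CH * (2 * (s ^ 2 * W)) := by
      apply mul_le_mul_of_nonneg_left _ hCH
      linarith
    linarith
  have e1 : (c - 1) * (l * ts) ≤ s ^ 2 * W * |l| := by
    have h8 : (c - 1) * (l * ts) ≤ |c - 1| * |l| * ts := by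
      have := le_abs_self ((c - 1) * (l * ts))
      rw [abs_mul, abs_mul, abs_of_pos hts] at this
      linarith
    have h9 : |c - 1| = 1 - c := by rw [abs_of_nonpos (by linarith)]; ring
    rw [h9] at h8
    calc (c - 1) * (l * ts) ≤ (1 - c) * |l| * ts := h8
      _ ≤ u * |l| * ts := by
          have := mul_le_mul_of_nonneg_right h1c (mul_nonneg (abs_nonneg l) hts.le)
          nlinarith [this]
      _ = s ^ 2 * W * |l| := by rw [mul_right_comm, hu_ts]
  have hfin : (0:ℝ) < s * W := mul_pos hs0 hW
  nlinarith [h5, hR', e1, mul_le_mul_of_nonneg_left hsD hfin.le, hfin, hCH,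
    mul_nonneg (mul_nonneg hs0.le hs0.le) hW.le]

lemma psd_of_opt {n : ℕ} (g : Fin n → ℝ) {H : Matrix (Fin n) (Fin n) ℝ} (hH : H.IsSymm)
    {xs : Fin n → ℝ} (hxs : xs ≠ 0) {l : ℝ}
    (hfo : H.mulVec xs = l • xs - g)
    (hopt : ∀ y, nsq y = nsq xs → quadObj g H xs ≤ quadObj g H y) :
    ∀ z : Fin n → ℝ, 0 ≤ z ⬝ᵥ H.mulVec z - l * nsq z := by
  have hts : 0 < nsq xs := nsq_pos hxs
  have hkey : ∀ z : Fin n → ℝ, xs ⬝ᵥ z ≠ 0 → 0 ≤ z ⬝ᵥ H.mulVec z - l * nsq z := by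
    intro z hz
    have hz0 : z ≠ 0 := by
      intro h; rw [h] at hz; simp at hz
    have hnz : 0 < nsq z := nsq_pos hz0
    set s := -2 * (xs ⬝ᵥ z) / nsq z with hs_def
    have hs0 : s ≠ 0 := by
      rw [hs_def]
      exact div_ne_zero (by intro h; apply hz; linarith [hz, (by nlinarith : xs ⬝ᵥ z = 0)])
        hnz.ne'
    have hsnz : s * nsq z = -2 * (xs ⬝ᵥ z) := by rw [hs_def]; field_simp
    set y := xs + s • z with hy_def
    have hd : y - xs = s • z := by rw [hy_def]; module
    have hny : nsq y = nsq xs := by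
      have hxxs : xs ⬝ᵥ xs = nsq xs := rfl
      have hzz : z ⬝ᵥ z = nsq z := rfl
      rw [nsq, hy_def]
      simp only [dotProduct_add, add_dotProduct, dotProduct_smul, smul_dotProduct, smul_eq_mul,
        dotProduct_comm z xs, hxxs, hzz]
      linear_combination s * hsnz
    have h0 := hopt y hny
    have hk := quad_key hH hfo y
    rw [hny, hd] at hk
    simp only [dotProduct_smul, smul_dotProduct, smul_eq_mul, Matrix.mulVec_smul] at hk
    have hnsq_s : nsq (s • z) = s ^ 2 * nsq z := by
      simp only [nsq, dotProduct_smul, smul_dotProduct, smul_eq_mul]; ring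
    rw [hnsq_s] at hk
    have h1 : 0 ≤ s * (s * (z ⬝ᵥ H.mulVec z)) - l * (s ^ 2 * nsq z) := by linarith
    have hs2 : 0 < s ^ 2 := by positivity
    nlinarith [h1, hs2]
  intro z
  rcases eq_or_ne (xs ⬝ᵥ z) 0 with hz | hz
  · set b := z ⬝ᵥ H.mulVec xs with hb_def
    set cc := xs ⬝ᵥ H.mulVec xs - l * nsq xs with hcc_def
    have hzx : z ⬝ᵥ xs = 0 := by rw [dotProduct_comm]; exact hz
    have hQ : ∀ ε : ℝ, ε ≠ 0 → 0 ≤ (z ⬝ᵥ H.mulVec z - l * nsq z) + 2 * ε * b + ε ^ 2 * cc := by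
      intro ε hε
      have hdz : xs ⬝ᵥ (z + ε • xs) ≠ 0 := by
        rw [dotProduct_add, dotProduct_smul, smul_eq_mul, hz]
        have : xs ⬝ᵥ xs = nsq xs := rfl
        rw [this, zero_add]
        exact mul_ne_zero hε hts.ne'
      have := hkey (z + ε • xs) hdz
      have hexp : (z + ε • xs) ⬝ᵥ H.mulVec (z + ε • xs)
          = z ⬝ᵥ H.mulVec z + 2 * ε * b + ε ^ 2 * (xs ⬝ᵥ H.mulVec xs) := by
        rw [Matrix.mulVec_add, Matrix.mulVec_smul]
        simp only [dotProduct_add, add_dotProduct, dotProduct_smul, smul_dotProduct, smul_eq_mul]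
        rw [dot_symm hH xs z, hb_def]
        ring
      have hnexp : nsq (z + ε • xs) = nsq z + ε ^ 2 * nsq xs := by
        simp only [nsq, dotProduct_add, add_dotProduct, dotProduct_smul, smul_dotProduct,
          smul_eq_mul, hz, hzx]
        have : xs ⬝ᵥ xs = nsq xs := rfl
        rw [this]; ring
      rw [hexp, hnexp] at this
      rw [hcc_def]
      linarith
    by_contra hneg
    push_neg at hneg
    set Q := z ⬝ᵥ H.mulVec z - l * nsq z with hQ_def
    have hQd : ∀ δ : ℝ, 0 < δ → 0 ≤ Q + δ ^ 2 * cc := by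
      intro δ hδ
      have h1 := hQ δ hδ.ne'
      have h2 := hQ (-δ) (neg_ne_zero.2 hδ.ne')
      nlinarith [h1, h2]
    rcases le_or_gt cc 0 with hcc | hcc
    · have := hQd 1 one_pos
      nlinarith
    · have hpos : (0:ℝ) < -Q / (2 * cc) := div_pos (by linarith) (by linarith)
      have hδ : 0 < Real.sqrt (-Q / (2 * cc)) := Real.sqrt_pos.2 hpos
      have hsq : Real.sqrt (-Q / (2 * cc)) ^ 2 = -Q / (2 * cc) :=
        Real.sq_sqrt hpos.le
      have := hQd _ hδ
      rw [hsq] at this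
      have : 0 ≤ Q + (-Q / (2 * cc)) * cc := by linarith
      have hfin : (-Q / (2 * cc)) * cc = -Q / 2 := by field_simp
      rw [hfin] at this
      linarith
  · exact hkey z hz

lemma subgrad_real {n : ℕ} (g : Fin n → ℝ) {H : Matrix (Fin n) (Fin n) ℝ}
    {ρ : ℝ → EReal} (hpos : ∀ t, 0 ≤ ρ t)
    (hconv : ∀ a b θ : ℝ, 0 ≤ θ → θ ≤ 1 →
      ρ (θ * a + (1 - θ) * b) ≤ (θ : EReal) * ρ a + ((1 - θ : ℝ) : EReal) * ρ b)
    {xs : Fin n → ℝ} (hxs : xs ≠ 0)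
    (hopt : ∀ y, (quadObj g H xs : EReal) + ρ (nsq xs)
      ≤ (quadObj g H y : EReal) + ρ (nsq y))
    (hfin : ρ (nsq xs) ≠ ⊤)
    {l : ℝ} (hl : l * nsq xs = g ⬝ᵥ xs + xs ⬝ᵥ H.mulVec xs)
    {yr : ℝ} (hyr : 0 ≤ yr) (hytop : ρ yr ≠ ⊤) :
    (ρ (nsq xs)).toReal + (-l) * (yr - nsq xs) ≤ (ρ yr).toReal := by
  set ts := nsq xs with hts_def
  have hts : 0 < ts := nsq_pos hxs
  set G := g ⬝ᵥ xs with hG_def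
  set Hq := xs ⬝ᵥ H.mulVec xs with hHq_def
  set rs := (ρ ts).toReal with hrs_def
  set ry := (ρ yr).toReal with hry_def
  set F : ℝ → ℝ := fun θ =>
    (2 * G / (1 + Real.sqrt (((1 - θ) * ts + θ * yr) / ts)) + Hq) * ((ts - yr) / ts)
    with hF_def
  have hstep : ∀ θ : ℝ, θ ∈ Ioc (0:ℝ) 1 → F θ ≤ ry - rs := by
    rintro θ ⟨hθ0, hθ1⟩
    set tθ := (1 - θ) * ts + θ * yr with htθ_def
    have htθ0 : 0 ≤ tθ := by
      have h1 : 0 ≤ (1 - θ) * ts := mul_nonneg (by linarith) hts.le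
      have h2 : 0 ≤ θ * yr := mul_nonneg hθ0.le hyr
      linarith
    set c := Real.sqrt (tθ / ts) with hc_def
    have hc0 : 0 ≤ c := Real.sqrt_nonneg _
    have hc2 : c ^ 2 = tθ / ts := Real.sq_sqrt (div_nonneg htθ0 hts.le)
    have hc2ts : c ^ 2 * ts = tθ := by rw [hc2]; field_simp
    have hxx : xs ⬝ᵥ xs = ts := rfl
    have hnx : nsq (c • xs) = tθ := by
      simp only [nsq, dotProduct_smul, smul_dotProduct, smul_eq_mul, hxx]
      nlinarith [hc2ts]
    have hqc : quadObj g H (c • xs) = 2 * c * G + c ^ 2 * Hq := by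
      simp only [quadObj, Matrix.mulVec_smul, dotProduct_smul, smul_dotProduct, smul_eq_mul,
        hG_def, hHq_def]
      ring
    have hqxs : quadObj g H xs = 2 * G + Hq := rfl
    have hconvθ := hconv yr ts θ hθ0.le hθ1
    have harg : θ * yr + (1 - θ) * ts = tθ := by rw [htθ_def]; ring
    rw [harg, rho_finite_coe hpos hytop, rho_finite_coe hpos hfin,
      ← EReal.coe_mul, ← EReal.coe_mul, ← EReal.coe_add] at hconvθ
    have hoptθ := hopt (c • xs)
    rw [hnx, rho_finite_coe hpos hfin] at hoptθ
    have hchain : ((quadObj g H xs + rs : ℝ) : EReal)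
        ≤ ((quadObj g H (c • xs) + (θ * ry + (1 - θ) * rs) : ℝ) : EReal) := by
      rw [EReal.coe_add, EReal.coe_add]
      exact le_trans hoptθ (add_le_add le_rfl hconvθ)
    rw [EReal.coe_le_coe_iff] at hchain
    rw [hqc, hqxs] at hchain
    have hme : 1 - c ^ 2 = θ * (ts - yr) / ts := by
      rw [hc2, htθ_def]
      field_simp
      ring
    have h1pc : (0:ℝ) < 1 + c := by linarith
    have hFθ : F θ = (2 * G / (1 + c) + Hq) * ((ts - yr) / ts) := by
      rw [hF_def]
    have hkey : θ * F θ = 2 * (1 - c) * G + (1 - c ^ 2) * Hq := by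
      rw [hFθ]
      have e1 : θ * ((ts - yr) / ts) = 1 - c ^ 2 := by rw [hme]; ring
      calc θ * ((2 * G / (1 + c) + Hq) * ((ts - yr) / ts))
          = (θ * ((ts - yr) / ts)) * (2 * G / (1 + c) + Hq) := by ring
        _ = (1 - c ^ 2) * (2 * G / (1 + c) + Hq) := by rw [e1]
        _ = 2 * (1 - c) * G + (1 - c ^ 2) * Hq := by
            field_simp
            ring
    have hmul : θ * F θ ≤ θ * (ry - rs) := by
      rw [hkey]
      nlinarith [hchain]
    exact le_of_mul_le_mul_left hmul hθ0
  have hcont : ContinuousAt F 0 := by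
    rw [hF_def]
    have h1 : ContinuousAt (fun θ : ℝ => ((1 - θ) * ts + θ * yr) / ts) 0 := by fun_prop
    have h2 : ContinuousAt (fun θ : ℝ => Real.sqrt (((1 - θ) * ts + θ * yr) / ts)) 0 :=
      Real.continuous_sqrt.continuousAt.comp h1
    have h3 : ContinuousAt (fun θ : ℝ => 1 + Real.sqrt (((1 - θ) * ts + θ * yr) / ts)) 0 :=
      continuousAt_const.add h2
    have hne : (fun θ : ℝ => 1 + Real.sqrt (((1 - θ) * ts + θ * yr) / ts)) 0 ≠ 0 := by
      have := Real.sqrt_nonneg (((1 - (0:ℝ)) * ts + 0 * yr) / ts)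
      simp only
      positivity
    exact ((continuousAt_const.div h3 hne).add continuousAt_const).mul continuousAt_const
  have hlim : Tendsto F (nhdsWithin (0:ℝ) (Ioi 0)) (nhds (F 0)) :=
    hcont.tendsto.mono_left nhdsWithin_le_nhds
  have hev : ∀ᶠ θ in nhdsWithin (0:ℝ) (Ioi 0), F θ ≤ ry - rs := by
    filter_upwards [Ioc_mem_nhdsGT_of_mem (by constructor <;> norm_num : (0:ℝ) ∈ Ico (0:ℝ) 1)]
      with θ hθ
    exact hstep θ hθ
  have hF0le : F 0 ≤ ry - rs := le_of_tendsto hlim hev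
  have hF0 : F 0 = l * (ts - yr) := by
    rw [hF_def]
    simp only
    rw [show ((1 - (0:ℝ)) * ts + 0 * yr) / ts = 1 by field_simp; ring, Real.sqrt_one]
    field_simp
    linear_combination (2 * yr - 2 * ts) * hl
  rw [hF0] at hF0le
  linarith

lemma backward_dir {n : ℕ} (g : Fin n → ℝ)
    (H : Matrix (Fin n) (Fin n) ℝ) (hH : H.IsSymm)
    (ρ : ℝ → EReal) (hpos : ∀ t, 0 ≤ ρ t) (hzero : ρ 0 = 0)
    (xs : Fin n → ℝ)
    (l : ℝ) (hfo : (H - l • (1 : Matrix (Fin n) (Fin n) ℝ)).mulVec xs = -g)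
    (hpsd : (H - l • (1 : Matrix (Fin n) (Fin n) ℝ)).PosSemidef)
    (hsub : (-l) ∈ subdiff (fun t => ρ t + indNonneg t) (nsq xs)) :
    ∀ y, (quadObj g H xs : EReal) + ρ (nsq xs) ≤ (quadObj g H y : EReal) + ρ (nsq y) := by
  have hfo' : H.mulVec xs = l • xs - g := by
    rw [Matrix.sub_mulVec, Matrix.smul_mulVec, Matrix.one_mulVec, sub_eq_iff_eq_add] at hfo
    rw [hfo]; abel
  have hts : (0:ℝ) ≤ nsq xs := nsq_nonneg_s1 xs
  have hind : indNonneg (nsq xs) = 0 := if_pos hts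
  have hind0 : indNonneg 0 = 0 := if_pos le_rfl
  have hsub0 := hsub 0
  simp only [hind, hind0, add_zero, hzero, zero_add] at hsub0
  have hnetop : ρ (nsq xs) ≠ ⊤ := by
    intro h
    rw [h, EReal.top_add_coe] at hsub0
    exact absurd hsub0 (by simp)
  set rs := (ρ (nsq xs)).toReal with hrs
  have hcoe : ρ (nsq xs) = (rs : EReal) := rho_finite_coe hpos hnetop
  intro y
  rcases eq_or_ne (ρ (nsq y)) ⊤ with hty | hty
  · rw [hty, EReal.coe_add_top]; exact le_top
  have hcoey : ρ (nsq y) = (((ρ (nsq y)).toReal : ℝ) : EReal) := rho_finite_coe hpos hty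
  set ry := (ρ (nsq y)).toReal with hry
  have hsuby := hsub (nsq y)
  have hindy : indNonneg (nsq y) = 0 := if_pos (nsq_nonneg_s1 y)
  simp only [hind, hindy, add_zero] at hsuby
  rw [hcoe, hcoey, ← EReal.coe_add, EReal.coe_le_coe_iff] at hsuby
  have hq := quad_key hH hfo' y
  have hpsd2 := hpsd.dotProduct_mulVec_nonneg (y - xs)
  have hstar : star (y - xs) = y - xs := by
    funext i; simp
  rw [hstar, Matrix.sub_mulVec, Matrix.smul_mulVec, Matrix.one_mulVec,
    dotProduct_sub, dotProduct_smul, smul_eq_mul] at hpsd2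
  have hreal : quadObj g H xs + rs ≤ quadObj g H y + ry := by
    have hnn : (y - xs) ⬝ᵥ (y - xs) = nsq (y - xs) := rfl
    rw [hnn] at hpsd2
    nlinarith [hsuby, hq, hpsd2]
  rw [hcoe, hcoey, ← EReal.coe_add, ← EReal.coe_add, EReal.coe_le_coe_iff]
  exact hreal

end Aux

set_option maxHeartbeats 1000000 in
theorem stmt1 {n : ℕ} (g : Fin n → ℝ) (hg : g ≠ 0)
    (H : Matrix (Fin n) (Fin n) ℝ) (hH : H.IsSymm)
    (ρ : ℝ → EReal) (hρ : RhoBasic ρ) (h1 : Assump1 ρ)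
    (xs : Fin n → ℝ) :
    (∀ y : Fin n → ℝ,
        (quadObj g H xs : EReal) + ρ (nsq xs) ≤ (quadObj g H y : EReal) + ρ (nsq y)) ↔
      ∃ l : ℝ, (H - l • (1 : Matrix (Fin n) (Fin n) ℝ)).mulVec xs = -g ∧
        (H - l • (1 : Matrix (Fin n) (Fin n) ℝ)).PosSemidef ∧ l ≤ 0 ∧
        (-l) ∈ subdiff (fun t => ρ t + indNonneg t) (nsq xs) := by
  obtain ⟨hpos, hzero, _, hconv⟩ := hρ
  obtain ⟨_, _, t₀, ht₀, hfin₀⟩ := h1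
  constructor
  · intro hopt
    rcases eq_or_ne xs 0 with rfl | hxs
    · exact (opt_ne_zero hg hpos hzero hconv ht₀ hfin₀.ne hopt).elim
    have hts : 0 < nsq xs := nsq_pos hxs
    -- finiteness of ρ (nsq xs)
    have h0 := hopt 0
    have hq00 : quadObj g H (0 : Fin n → ℝ) = 0 := by simp [quadObj]
    have hnsq00 : nsq (0 : Fin n → ℝ) = 0 := by simp [nsq]
    rw [hq00, hnsq00, hzero] at h0
    have hfin : ρ (nsq xs) ≠ ⊤ := by
      intro h
      rw [h, EReal.coe_add_top] at h0
      simp at h0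
    set rs := (ρ (nsq xs)).toReal with hrs_def
    have hcoe : ρ (nsq xs) = (rs : EReal) := rho_finite_coe hpos hfin
    have hrs0 : 0 ≤ rs := ereal_toReal_nonneg (hpos (nsq xs))
    -- sphere optimality
    have hsph : ∀ y, nsq y = nsq xs → quadObj g H xs ≤ quadObj g H y := by
      intro y hy
      have h2 := hopt y
      rw [hy, hcoe, ← EReal.coe_add, ← EReal.coe_add, EReal.coe_le_coe_iff] at h2
      linarith
    -- first-order condition
    set l := (xs ⬝ᵥ (H.mulVec xs + g)) / nsq xs with hl_def
    have hvfo := first_order g hH hxs hsph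
    rw [← hl_def] at hvfo
    have hfo' : H.mulVec xs = l • xs - g := by rw [eq_sub_iff_add_eq]; exact hvfo
    have hl_ts : l * nsq xs = g ⬝ᵥ xs + xs ⬝ᵥ H.mulVec xs := by
      have hexp : xs ⬝ᵥ (H.mulVec xs + g) = g ⬝ᵥ xs + xs ⬝ᵥ H.mulVec xs := by
        rw [dotProduct_add, dotProduct_comm xs g]; ring
      rw [hl_def, hexp]
      field_simp
    -- the subgradient inequality, real form
    have hsg : ∀ yr : ℝ, 0 ≤ yr → ρ yr ≠ ⊤ →
        rs + (-l) * (yr - nsq xs) ≤ (ρ yr).toReal := fun yr hyr hytop =>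
      subgrad_real g hpos hconv hxs hopt hfin hl_ts hyr hytop
    -- l ≤ 0
    have hl0 : l ≤ 0 := by
      have h00 := hsg 0 le_rfl (by rw [hzero]; simp)
      rw [hzero, EReal.toReal_zero] at h00
      by_contra hcon
      push_neg at hcon
      nlinarith [mul_pos hcon hts]
    refine ⟨l, ?_, ?_, hl0, ?_⟩
    · rw [Matrix.sub_mulVec, Matrix.smul_mulVec, Matrix.one_mulVec, hfo']
      abel
    · have hqz := psd_of_opt g hH hxs hfo' hsph
      refine .of_dotProduct_mulVec_nonneg ?_ ?_
      · rw [Matrix.IsHermitian, Matrix.conjTranspose_eq_transpose_of_trivial,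
          Matrix.transpose_sub, Matrix.transpose_smul, Matrix.transpose_one, hH.eq]
      · intro x
        have hsx : star x = x := by funext i; simp
        rw [hsx, Matrix.sub_mulVec, Matrix.smul_mulVec, Matrix.one_mulVec,
          dotProduct_sub, dotProduct_smul, smul_eq_mul]
        have hnn : x ⬝ᵥ x = nsq x := rfl
        rw [hnn]
        have := hqz x
        linarith
    · intro yv
      have hindts : indNonneg (nsq xs) = 0 := if_pos (nsq_nonneg_s1 xs)
      show (ρ (nsq xs) + indNonneg (nsq xs)) + (((-l) * (yv - nsq xs) : ℝ) : EReal)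
          ≤ ρ yv + indNonneg yv
      rw [hindts, add_zero]
      rcases lt_or_ge yv 0 with hyv | hyv
      · have hiy : indNonneg yv = ⊤ := if_neg (not_le.2 hyv)
        rw [hiy, EReal.add_top_of_ne_bot (rho_ne_bot hpos yv)]
        exact le_top
      · have hiy : indNonneg yv = 0 := if_pos hyv
        rw [hiy, add_zero]
        rcases eq_or_ne (ρ yv) ⊤ with hty | hty
        · rw [hty]; exact le_top
        · have hr := hsg yv hyv hty
          rw [hcoe, ← EReal.coe_add, rho_finite_coe hpos hty, EReal.coe_le_coe_iff]
          linarith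
  · rintro ⟨l, hfo, hpsd, _, hsub⟩
    exact backward_dir g H hH ρ hpos hzero xs l hfo hpsd hsub

end
end

section
/- Let g ∈ ℝⁿ \ {0}, let H be a symmetric n×n real matrix, and let ρ: ℝ → [0,∞] be a proper closed convex function with ρ(0) = 0 satisfying Assumptions 1–3. Set λ̃ := min{0, λ_min(H)} and let λ* < λ̃. Then (x*, λ*) satisfies the optimality conditions (H − λ*I)x* = −g, H − λ*I ⪰ 0, λ* ≤ 0, and −λ* ∈ ∂(ρ + δ_{ℝ₊})(‖x*‖²) if and only if λ* satisfies ‖(H − λ*I)⁻¹g‖² = (ρ⁺)'(−λ*) and x* = −(H − λ*I)⁻¹g. -/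
open Matrix Filter Set Topology

noncomputable section

lemma rayleigh_bdd {m : Type*} [Fintype m] (H : Matrix m m ℝ) {x : m → ℝ} (hx : x ⬝ᵥ x = 1) :
    |x ⬝ᵥ H.mulVec x| ≤ ∑ i, ∑ j, |H i j| := by
  have hb : ∀ i, |x i| ≤ 1 := by
    intro i
    rw [abs_le_one_iff_mul_self_le_one]
    calc x i * x i ≤ ∑ j, x j * x j :=
          Finset.single_le_sum (fun j _ => mul_self_nonneg (x j)) (Finset.mem_univ i)
      _ = 1 := hx
  calc |x ⬝ᵥ H.mulVec x| ≤ ∑ i, |x i * (H.mulVec x i)| := Finset.abs_sum_le_sum_abs _ _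
    _ ≤ ∑ i, ∑ j, |H i j| := by
        apply Finset.sum_le_sum
        intro i _
        rw [abs_mul]
        calc |x i| * |H.mulVec x i| ≤ 1 * |H.mulVec x i| := by
              exact mul_le_mul_of_nonneg_right (hb i) (abs_nonneg _)
          _ = |∑ j, H i j * x j| := by rw [one_mul]; rfl
          _ ≤ ∑ j, |H i j * x j| := Finset.abs_sum_le_sum_abs _ _
          _ ≤ ∑ j, |H i j| := by
              apply Finset.sum_le_sum
              intro j _
              rw [abs_mul]
              calc |H i j| * |x j| ≤ |H i j| * 1 := mul_le_mul_of_nonneg_left (hb j) (abs_nonneg _)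
                _ = |H i j| := mul_one _

lemma lambdaMin_le {m : Type*} [Fintype m] (H : Matrix m m ℝ) {x : m → ℝ} (hx : x ⬝ᵥ x = 1) :
    lambdaMin H ≤ x ⬝ᵥ H.mulVec x := by
  apply ciInf_le _ (⟨x, hx⟩ : {x : m → ℝ // x ⬝ᵥ x = 1})
  refine ⟨-(∑ i, ∑ j, |H i j|), ?_⟩
  rintro v ⟨⟨y, hy⟩, rfl⟩
  exact neg_le_of_abs_le (rayleigh_bdd H hy)

lemma lambdaMin_quad {m : Type*} [Fintype m] (H : Matrix m m ℝ) (x : m → ℝ) (hx : x ≠ 0) :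
    lambdaMin H * (x ⬝ᵥ x) ≤ x ⬝ᵥ H.mulVec x := by
  have hc : 0 < x ⬝ᵥ x := by
    rcases (Finset.sum_nonneg (fun i (_ : i ∈ Finset.univ) => mul_self_nonneg (x i))).lt_or_eq with h | h
    · exact h
    · exact absurd ((dotProduct_self_eq_zero).1 h.symm) hx
  set c := x ⬝ᵥ x with hcdef
  set y : m → ℝ := (Real.sqrt c)⁻¹ • x with hy
  have hsq : Real.sqrt c * Real.sqrt c = c := Real.mul_self_sqrt hc.le
  have hs0 : Real.sqrt c ≠ 0 := by positivity
  have hy1 : y ⬝ᵥ y = 1 := by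
    rw [hy, smul_dotProduct, dotProduct_smul, smul_eq_mul, smul_eq_mul, ← hcdef]
    field_simp
    nlinarith [hsq]
  have h2 : y ⬝ᵥ H.mulVec y = c⁻¹ * (x ⬝ᵥ H.mulVec x) := by
    rw [hy, Matrix.mulVec_smul, smul_dotProduct, dotProduct_smul,
      smul_eq_mul, smul_eq_mul, ← mul_assoc, ← mul_inv, hsq]
  have := lambdaMin_le H hy1
  rw [h2] at this
  calc lambdaMin H * c ≤ (c⁻¹ * (x ⬝ᵥ H.mulVec x)) * c := by
        exact mul_le_mul_of_nonneg_right this hc.le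
    _ = x ⬝ᵥ H.mulVec x := by field_simp

lemma posdef_shift {n : ℕ} (H : Matrix (Fin n) (Fin n) ℝ) (hH : H.IsSymm) {ls : ℝ}
    (hls : ls < lambdaMin H) : (H - ls • (1 : Matrix (Fin n) (Fin n) ℝ)).PosDef := by
  rw [Matrix.posDef_iff_dotProduct_mulVec]
  constructor
  · apply Matrix.IsHermitian.sub
    · show Hᴴ = H
      ext i j
      simp only [Matrix.conjTranspose_apply, star_trivial]
      exact congrFun (congrFun hH i) j
    · show _ = _
      simp [Matrix.conjTranspose_smul]
  · intro x hx
    have hc : 0 < x ⬝ᵥ x := by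
      rcases (Finset.sum_nonneg (fun i (_ : i ∈ Finset.univ) => mul_self_nonneg (x i))).lt_or_eq with h | h
      · exact h
      · exact absurd ((dotProduct_self_eq_zero).1 h.symm) hx
    have hmv : (H - ls • (1 : Matrix (Fin n) (Fin n) ℝ)).mulVec x = H.mulVec x - ls • x := by
      simp [Matrix.sub_mulVec, Matrix.smul_mulVec]
    rw [star_trivial, hmv, dotProduct_sub, dotProduct_smul, smul_eq_mul]
    have h1 := lambdaMin_quad H x hx
    nlinarith

lemma mulVec_eq_iff {n : ℕ} (A : Matrix (Fin n) (Fin n) ℝ) (hA : A.PosDef)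
    (x g : Fin n → ℝ) : A.mulVec x = -g ↔ x = -(A⁻¹.mulVec g) := by
  have hdet : IsUnit A.det := (Matrix.isUnit_iff_isUnit_det _).1 hA.isUnit
  constructor
  · intro h
    have : A⁻¹.mulVec (A.mulVec x) = A⁻¹.mulVec (-g) := by rw [h]
    rwa [Matrix.mulVec_mulVec, Matrix.nonsing_inv_mul A hdet, Matrix.one_mulVec,
      Matrix.mulVec_neg] at this
  · intro h
    rw [h, Matrix.mulVec_neg, Matrix.mulVec_mulVec, Matrix.mul_nonsing_inv A hdet,
      Matrix.one_mulVec]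

namespace Stmt5Aux

variable {ρ : ℝ → EReal}

lemma zero_le_mconj (hρ0 : ρ 0 = 0) (u : ℝ) : 0 ≤ mconj ρ u := by
  have h := le_iSup (fun t : {t : ℝ // 0 ≤ t} => (((u * (t : ℝ) : ℝ) : EReal) - ρ t))
    ⟨0, le_refl 0⟩
  exact le_trans (by simp [hρ0]) h

lemma mconj_ne_bot (hρ0 : ρ 0 = 0) (u : ℝ) : mconj ρ u ≠ ⊥ :=
  fun h => by simpa [h] using zero_le_mconj hρ0 u

lemma mconj_ne_top (hnn : ∀ t, 0 ≤ ρ t) (h2 : Assump2 ρ) (u : ℝ) : mconj ρ u ≠ ⊤ := by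
  obtain ⟨a, ha⟩ := eventually_atTop.1 (h2 (u + 1))
  set T := max a 0 with hT
  have hbound : mconj ρ u ≤ ((|u| * T : ℝ) : EReal) := by
    apply iSup_le
    rintro ⟨t, ht⟩
    by_cases hcase : t ≤ T
    · calc ((u * t : ℝ) : EReal) - ρ t ≤ ((u * t : ℝ) : EReal) - 0 :=
            EReal.sub_le_sub le_rfl (hnn t)
        _ = ((u * t : ℝ) : EReal) := by rw [sub_zero]
        _ ≤ ((|u| * T : ℝ) : EReal) := by
            apply EReal.coe_le_coe_iff.2
            calc u * t ≤ |u * t| := le_abs_self _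
              _ = |u| * |t| := abs_mul u t
              _ ≤ |u| * T := by
                  apply mul_le_mul_of_nonneg_left _ (abs_nonneg u)
                  rw [abs_of_nonneg ht]; exact hcase
    · push_neg at hcase
      have hta : a ≤ t := le_trans (le_max_left a 0) hcase.le
      calc ((u * t : ℝ) : EReal) - ρ t ≤ ((u * t : ℝ) : EReal) - (((u+1) * t : ℝ) : EReal) :=
            EReal.sub_le_sub le_rfl (ha t hta)
        _ = ((u * t - (u+1) * t : ℝ) : EReal) := by rw [EReal.coe_sub]
        _ ≤ ((|u| * T : ℝ) : EReal) := by
            apply EReal.coe_le_coe_iff.2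
            have h1 : u * t - (u+1)*t = -t := by ring
            rw [h1]
            have h2 : (0:ℝ) ≤ |u| * T := mul_nonneg (abs_nonneg u) (le_max_right a 0)
            linarith [ht]
  intro h
  rw [h] at hbound
  exact EReal.coe_ne_top _ (top_le_iff.1 hbound)


def IsMaximizer (ρ : ℝ → EReal) (u s : ℝ) : Prop :=
  0 ≤ s ∧ ρ s ≠ ⊤ ∧ ∀ y, 0 ≤ y → ((u * y : ℝ) : EReal) - ρ y ≤ ((u * s : ℝ) : EReal) - ρ s

variable {ρ : ℝ → EReal}

lemma isClosed_lsc_le (hlsc : LowerSemicontinuous ρ) {c : ℝ → ℝ} (hc : Continuous c) :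
    IsClosed {y : ℝ | ρ y ≤ ((c y : ℝ) : EReal)} := by
  rw [← isOpen_compl_iff, isOpen_iff_mem_nhds]
  intro y hy
  simp only [mem_compl_iff, mem_setOf_eq, not_le] at hy
  obtain ⟨z, hz1, hz2⟩ := EReal.exists_between_coe_real hy
  have h1 : ∀ᶠ y' in 𝓝 y, (z : EReal) < ρ y' := hlsc y (z : EReal) hz2
  have h2 : ∀ᶠ y' in 𝓝 y, c y' < z :=
    (hc.tendsto y).eventually_lt_const (EReal.coe_lt_coe_iff.1 hz1)
  filter_upwards [h1, h2] with y' hy1 hy2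
  simp only [mem_compl_iff, mem_setOf_eq, not_le]
  exact lt_trans (EReal.coe_lt_coe_iff.2 hy2) hy1

lemma exists_maximizer (hρ : RhoBasic ρ) (h1 : Assump1 ρ) (h2 : Assump2 ρ)
    {u : ℝ} (hu : 0 < u) : ∃ s, IsMaximizer ρ u s := by
  obtain ⟨hnn, hρ0, hlsc, -⟩ := hρ
  obtain ⟨a, ha⟩ := eventually_atTop.1 (h2 (u + 1))
  set T := max a 1 with hTdef
  have hT1 : (1:ℝ) ≤ T := le_max_right a 1
  set m := mconj ρ u with hm
  have hmtop : m ≠ ⊤ := mconj_ne_top hnn h2 u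
  have hmbot : m ≠ ⊥ := mconj_ne_bot hρ0 u
  set mr := m.toReal with hmr
  have hmeq : (mr : EReal) = m := EReal.coe_toReal hmtop hmbot
  have hmr0 : 0 ≤ mr := by
    have h0 : (0:EReal) ≤ (mr : EReal) := by rw [hmeq]; exact zero_le_mconj hρ0 u
    exact_mod_cast h0
  -- tail bound: for y > T, F y ≤ -y
  have htail : ∀ y : ℝ, T < y → ((u * y : ℝ) : EReal) - ρ y ≤ ((-y : ℝ) : EReal) := by
    intro y hy
    have hya : a ≤ y := le_trans (le_max_left a 1) hy.le
    calc ((u * y : ℝ) : EReal) - ρ y ≤ ((u * y : ℝ) : EReal) - (((u+1) * y : ℝ) : EReal) :=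
          EReal.sub_le_sub le_rfl (ha y hya)
      _ = ((u * y - (u+1) * y : ℝ) : EReal) := by rw [EReal.coe_sub]
      _ = ((-y : ℝ) : EReal) := by rw [show u * y - (u+1) * y = -y by ring]
  -- the nested closed sets
  set A : ℕ → Set ℝ := fun k =>
    Icc (0:ℝ) T ∩ {y : ℝ | ρ y ≤ ((u * y - (mr - 1/(k+1)) : ℝ) : EReal)} with hA
  have hclosed : ∀ k, IsClosed (A k) := by
    intro k
    exact isClosed_Icc.inter (isClosed_lsc_le hlsc (by continuity))
  have hmono : ∀ k, A (k+1) ⊆ A k := by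
    intro k y hy
    refine ⟨hy.1, ?_⟩
    refine le_trans hy.2 (EReal.coe_le_coe_iff.2 ?_)
    have : (1:ℝ)/(k+1+1) ≤ 1/(k+1) := by
      apply one_div_le_one_div_of_le
      · positivity
      · push_cast; linarith
    push_cast
    linarith
  have hne : ∀ k, (A k).Nonempty := by
    intro k
    have hek : (0:ℝ) < 1/(k+1) := by positivity
    have hek1 : (1:ℝ)/(k+1) ≤ 1 := by
      rw [div_le_one (by positivity)]
      linarith [Nat.cast_nonneg (α := ℝ) k]
    have hlt : ((mr - 1/(k+1) : ℝ) : EReal) < m := by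
      rw [← hmeq]
      exact_mod_cast (by linarith : mr - 1/(k+1) < mr)
    rw [hm, mconj, lt_iSup_iff] at hlt
    obtain ⟨⟨y, hy0⟩, hy⟩ := hlt
    simp only at hy
    have hρy : ρ y ≠ ⊤ := by
      intro hterm
      rw [hterm, EReal.sub_top] at hy
      exact absurd hy (by simp)
    have hρyb : ρ y ≠ ⊥ := ne_of_gt (lt_of_lt_of_le (by simp : (⊥:EReal) < 0) (hnn y))
    set r := (ρ y).toReal with hr
    have hρyeq : ρ y = (r : EReal) := (EReal.coe_toReal hρy hρyb).symm
    rw [hρyeq, ← EReal.coe_sub, EReal.coe_lt_coe_iff] at hy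
    -- hy : mr - 1/(k+1) < u*y - r
    have hyT : y ≤ T := by
      by_contra hyc
      push_neg at hyc
      have := htail y hyc
      rw [hρyeq, ← EReal.coe_sub, EReal.coe_le_coe_iff] at this
      -- u*y - r ≤ -y, but -y < -T ≤ -1 ≤ mr - 1/(k+1)
      have : u * y - r ≤ -y := this
      have hneg : -y < -1 := by linarith
      linarith
    refine ⟨y, ⟨hy0, hyT⟩, ?_⟩
    simp only [mem_setOf_eq]
    rw [hρyeq]
    exact EReal.coe_le_coe_iff.2 (by linarith)
  have hcompact : IsCompact (A 0) :=
    isCompact_Icc.of_isClosed_subset (hclosed 0) (inter_subset_left)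
  obtain ⟨s, hs⟩ := IsCompact.nonempty_iInter_of_sequence_nonempty_isCompact_isClosed
    A hmono hne hcompact hclosed
  simp only [mem_iInter] at hs
  have hs0 : 0 ≤ s := (hs 0).1.1
  have hρs_top : ρ s ≠ ⊤ := by
    intro hterm
    have : ρ s ≤ ((u * s - (mr - 1/((0:ℕ)+1)) : ℝ) : EReal) := (hs 0).2
    rw [hterm] at this
    exact EReal.coe_ne_top _ (top_le_iff.1 this)
  have hρs_bot : ρ s ≠ ⊥ := ne_of_gt (lt_of_lt_of_le (by simp : (⊥:EReal) < 0) (hnn s))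
  set rs := (ρ s).toReal with hrs
  have hρseq : ρ s = (rs : EReal) := (EReal.coe_toReal hρs_top hρs_bot).symm
  have hkey : rs ≤ u * s - mr := by
    have hseq : ∀ k : ℕ, rs ≤ u * s - (mr - 1/(k+1)) := by
      intro k
      have hthis : ρ s ≤ ((u * s - (mr - 1/((k:ℝ)+1)) : ℝ) : EReal) := (hs k).2
      rw [hρseq, EReal.coe_le_coe_iff] at hthis
      exact hthis
    have hlim : Tendsto (fun k : ℕ => u * s - (mr - 1/(k+1))) atTop (𝓝 (u * s - (mr - 0))) := by
      apply Tendsto.const_sub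
      apply Tendsto.const_sub
      exact tendsto_one_div_add_atTop_nhds_zero_nat
    rw [sub_zero] at hlim
    exact ge_of_tendsto' hlim hseq
  refine ⟨s, hs0, hρs_top, ?_⟩
  intro y hy0
  calc ((u * y : ℝ) : EReal) - ρ y ≤ m :=
        le_iSup (fun t : {t : ℝ // 0 ≤ t} => (((u * (t:ℝ) : ℝ) : EReal) - ρ t)) ⟨y, hy0⟩
    _ ≤ ((u * s - rs : ℝ) : EReal) := by
        rw [← hmeq]; exact EReal.coe_le_coe_iff.2 (by linarith)
    _ = ((u * s : ℝ) : EReal) - ρ s := by rw [hρseq, EReal.coe_sub]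


variable {ρ : ℝ → EReal}

lemma maximizer_mconj {u s : ℝ} (hs : IsMaximizer ρ u s) :
    mconj ρ u = ((u * s : ℝ) : EReal) - ρ s := by
  apply le_antisymm
  · exact iSup_le fun t => hs.2.2 t t.2
  · exact le_iSup (fun t : {t : ℝ // 0 ≤ t} => (((u * (t:ℝ) : ℝ) : EReal) - ρ t)) ⟨s, hs.1⟩

lemma maximizer_subgrad (hnn : ∀ t, 0 ≤ ρ t) (h2 : Assump2 ρ)
    {u s : ℝ} (hs : IsMaximizer ρ u s) (v : ℝ) :
    mconjR ρ u + s * (v - u) ≤ mconjR ρ v := by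
  have hρs_bot : ρ s ≠ ⊥ := ne_of_gt (lt_of_lt_of_le (by simp : (⊥:EReal) < 0) (hnn s))
  set rs := (ρ s).toReal with hrs
  have hρseq : ρ s = (rs : EReal) := (EReal.coe_toReal hs.2.1 hρs_bot).symm
  have hvalu : mconjR ρ u = u * s - rs := by
    rw [mconjR, maximizer_mconj hs, hρseq, ← EReal.coe_sub, EReal.toReal_coe]
  have hvalv : v * s - rs ≤ mconjR ρ v := by
    have hle : ((v * s - rs : ℝ) : EReal) ≤ mconj ρ v := by
      rw [EReal.coe_sub, ← hρseq]
      exact le_iSup (fun t : {t : ℝ // 0 ≤ t} => (((v * (t:ℝ) : ℝ) : EReal) - ρ t)) ⟨s, hs.1⟩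
    have := EReal.toReal_le_toReal hle (EReal.coe_ne_bot _) (mconj_ne_top hnn h2 v)
    rwa [EReal.toReal_coe] at this
  rw [hvalu]
  linarith

lemma subgrad_eq_deriv {φ : ℝ → ℝ} {u s : ℝ} (hd : DifferentiableAt ℝ φ u)
    (h : ∀ v, φ u + s * (v - u) ≤ φ v) : s = deriv φ u := by
  have H := hd.hasDerivAt
  rw [hasDerivAt_iff_tendsto_slope] at H
  have hsub1 : 𝓝[>] u ≤ 𝓝[≠] u := nhdsWithin_mono u fun v hv => ne_of_gt hv
  have hsub2 : 𝓝[<] u ≤ 𝓝[≠] u := nhdsWithin_mono u fun v hv => ne_of_lt hv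
  have h1 : s ≤ deriv φ u := by
    apply ge_of_tendsto (H.mono_left hsub1)
    filter_upwards [self_mem_nhdsWithin] with v hv
    have hv' : 0 < v - u := sub_pos.2 hv
    rw [slope_def_field, le_div_iff₀ hv']
    have := h v
    linarith
  have h2' : deriv φ u ≤ s := by
    apply le_of_tendsto (H.mono_left hsub2)
    filter_upwards [self_mem_nhdsWithin] with v hv
    have hv' : v - u < 0 := sub_neg.2 hv
    rw [slope_def_field, div_le_iff_of_neg hv']
    have := h v
    linarith
  linarith


variable {ρ : ℝ → EReal}

lemma subdiff_iff_maximizer (hnn : ∀ t, 0 ≤ ρ t) (hρ0 : ρ 0 = 0) {u t : ℝ} (hu : 0 < u) :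
    u ∈ subdiff (fun y => ρ y + indNonneg y) t ↔ IsMaximizer ρ u t := by
  have hρbot : ∀ y, ρ y ≠ ⊥ := fun y =>
    ne_of_gt (lt_of_lt_of_le (by simp : (⊥:EReal) < 0) (hnn y))
  constructor
  · intro h
    have hf0 : ρ (0:ℝ) + indNonneg 0 = 0 := by
      rw [hρ0, indNonneg]; simp
    have hft : ρ t + indNonneg t ≠ ⊤ := by
      intro htop
      have h0 := h 0
      simp only at h0
      rw [htop, EReal.top_add_coe, hf0] at h0
      exact absurd h0 (by simp)
    have ht0 : 0 ≤ t := by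
      by_contra hc
      push_neg at hc
      apply hft
      rw [indNonneg, if_neg (not_le.2 hc)]
      exact EReal.add_top_of_ne_bot (hρbot t)
    have hind : indNonneg t = 0 := by rw [indNonneg, if_pos ht0]
    have hfteq : ρ t + indNonneg t = ρ t := by rw [hind, add_zero]
    have hρt_top : ρ t ≠ ⊤ := by rw [← hfteq]; exact hft
    set r := (ρ t).toReal with hr
    have hρteq : ρ t = (r : EReal) := (EReal.coe_toReal hρt_top (hρbot t)).symm
    refine ⟨ht0, hρt_top, ?_⟩
    intro y hy0
    have hy := h y
    simp only at hy
    rw [hfteq, hρteq, indNonneg, if_pos hy0, add_zero, ← EReal.coe_add] at hy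
    -- hy : ((r + u*(y-t) : ℝ) : EReal) ≤ ρ y
    calc ((u * y : ℝ) : EReal) - ρ y ≤ ((u * y : ℝ) : EReal) - ((r + u*(y-t) : ℝ) : EReal) :=
          EReal.sub_le_sub le_rfl hy
      _ = ((u * y - (r + u*(y-t)) : ℝ) : EReal) := by rw [EReal.coe_sub]
      _ = ((u * t - r : ℝ) : EReal) := by rw [show u*y - (r + u*(y-t)) = u*t - r by ring]
      _ = ((u * t : ℝ) : EReal) - ρ t := by rw [hρteq, EReal.coe_sub]
  · rintro ⟨ht0, hρt_top, hmax⟩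
    intro y
    set r := (ρ t).toReal with hr
    have hρteq : ρ t = (r : EReal) := (EReal.coe_toReal hρt_top (hρbot t)).symm
    have hfteq : ρ t + indNonneg t = (r : EReal) := by
      rw [indNonneg, if_pos ht0, add_zero, hρteq]
    simp only
    rw [hfteq]
    by_cases hy0 : 0 ≤ y
    · rw [indNonneg, if_pos hy0, add_zero]
      by_cases hρy : ρ y = ⊤
      · rw [hρy]; exact le_top
      · set q := (ρ y).toReal with hq
        have hρyeq : ρ y = (q : EReal) := (EReal.coe_toReal hρy (hρbot y)).symm
        have := hmax y hy0
        rw [hρteq, hρyeq, ← EReal.coe_sub, ← EReal.coe_sub, EReal.coe_le_coe_iff] at this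
        rw [hρyeq, ← EReal.coe_add, EReal.coe_le_coe_iff]
        linarith
    · rw [indNonneg, if_neg hy0, EReal.add_top_of_ne_bot (hρbot y)]
      exact le_top

lemma subdiff_iff_eq_deriv (hρ : RhoBasic ρ) (h1 : Assump1 ρ) (h2 : Assump2 ρ)
    (h3 : Assump3 ρ) {u t : ℝ} (hu : 0 < u) :
    u ∈ subdiff (fun y => ρ y + indNonneg y) t ↔ t = deriv (mconjR ρ) u := by
  obtain ⟨hnn, hρ0, hlsc, hconv⟩ := hρ
  constructor
  · intro h
    exact subgrad_eq_deriv (h3 u hu)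
      (maximizer_subgrad hnn h2 ((subdiff_iff_maximizer hnn hρ0 hu).1 h))
  · intro ht
    obtain ⟨s, hs⟩ := exists_maximizer ⟨hnn, hρ0, hlsc, hconv⟩ h1 h2 hu
    have hst : s = deriv (mconjR ρ) u :=
      subgrad_eq_deriv (h3 u hu) (maximizer_subgrad hnn h2 hs)
    rw [ht, ← hst]
    exact (subdiff_iff_maximizer hnn hρ0 hu).2 hs


end Stmt5Aux

open Stmt5Aux in
theorem stmt5 {n : ℕ} (g : Fin n → ℝ) (hg : g ≠ 0)
    (H : Matrix (Fin n) (Fin n) ℝ) (hH : H.IsSymm)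
    (ρ : ℝ → EReal) (hρ : RhoBasic ρ) (h1 : Assump1 ρ) (h2 : Assump2 ρ) (h3 : Assump3 ρ)
    (xs : Fin n → ℝ) (ls : ℝ) (hls : ls < min 0 (lambdaMin H)) :
    ((H - ls • (1 : Matrix (Fin n) (Fin n) ℝ)).mulVec xs = -g ∧
        (H - ls • (1 : Matrix (Fin n) (Fin n) ℝ)).PosSemidef ∧ ls ≤ 0 ∧
        (-ls) ∈ subdiff (fun t => ρ t + indNonneg t) (nsq xs)) ↔
      (nsq (((H - ls • (1 : Matrix (Fin n) (Fin n) ℝ))⁻¹).mulVec g) = deriv (mconjR ρ) (-ls) ∧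
        xs = -(((H - ls • (1 : Matrix (Fin n) (Fin n) ℝ))⁻¹).mulVec g)) := by
  set A := H - ls • (1 : Matrix (Fin n) (Fin n) ℝ) with hAdef
  have hls0 : ls < 0 := lt_of_lt_of_le hls (min_le_left _ _)
  have hlsl : ls < lambdaMin H := lt_of_lt_of_le hls (min_le_right _ _)
  have hA : A.PosDef := posdef_shift H hH hlsl
  have hu : (0:ℝ) < -ls := by linarith
  have hiff := fun t => subdiff_iff_eq_deriv hρ h1 h2 h3 (u := -ls) (t := t) hu
  constructor
  · rintro ⟨heq, -, -, hsub⟩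
    have hx : xs = -(A⁻¹.mulVec g) := (mulVec_eq_iff A hA xs g).1 heq
    have hn : nsq (A⁻¹.mulVec g) = nsq xs := by
      rw [hx]; simp [nsq]
    refine ⟨?_, hx⟩
    rw [hn]
    exact (hiff (nsq xs)).1 hsub
  · rintro ⟨hn, hx⟩
    refine ⟨(mulVec_eq_iff A hA xs g).2 hx, hA.posSemidef, hls0.le, ?_⟩
    apply (hiff (nsq xs)).2
    rw [hx]
    have hneg : nsq (-(A⁻¹.mulVec g)) = nsq (A⁻¹.mulVec g) := by simp [nsq]
    rw [hneg, hn]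


end
end
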